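/- arXiv:2412.11991 — 7 statements merged into one kernel-verified Lean document; each statement's English description precedes it below -/
import Mathlib

section
/- Let the abstract trust-region setting and Assumption A hold, let J be bounded below on X, and suppose the trust-region algorithm produces an infinite sequence of iterates (x_n). Then the criticality measure converges to zero along the iterates: lim_{n→∞} C(x_n) = 0. -/
open Filter

set_option maxHeartbeats 2000000 in
/-- Convergence of the criticality measure to zero along the iterates of the abstract
trust-region algorithm (without trust-region radius reset) under Assumption A,
provided `J` is bounded below and the algorithm produces an infinite sequence of iterates. -/
theorem criticality_tendsto_zero
    {X : Type*} [MetricSpace X]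
    (J : X → ℝ) (C : X → ℝ) (pred : X → ℝ → ℝ)
    -- abstract trust-region setting
    (σ : ℝ) (hσ0 : 0 < σ) (hσ1 : σ < 1)
    (Δmax : ENNReal) (hΔmax : 0 < Δmax)
    (hCnonneg : ∀ y : X, 0 ≤ C y)
    (hpredmono : ∀ y : X, ∀ d₁ d₂ : ℝ, 0 ≤ d₁ → d₁ ≤ d₂ → pred y d₁ ≤ pred y d₂)
    (x xt : ℕ → X) (Δ : ℕ → ℝ) (hΔpos : ∀ n, 0 < Δ n)
    (htrial : ∀ n, dist (x n) (xt n) ≤ Δ n)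
    -- the algorithm never terminates, i.e., produces an infinite sequence of iterates
    (hnoterm : ∀ n, pred (x n) (Δ n) ≠ 0)
    -- successful iteration: accept the trial point and double the radius (capped at Δmax)
    (hsucc : ∀ n, σ * pred (x n) (Δ n) ≤ J (x n) - J (xt n) →
      x (n + 1) = xt n ∧ Δ (n + 1) = (min (ENNReal.ofReal (2 * Δ n)) Δmax).toReal)
    -- unsuccessful iteration: keep the iterate and halve the radius
    (hfail : ∀ n, ¬ σ * pred (x n) (Δ n) ≤ J (x n) - J (xt n) →
      x (n + 1) = x n ∧ Δ (n + 1) = Δ n / 2)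
    -- Assumption A (1)
    (c₀ c₁ s : ℝ) (Δa : X → ℝ)
    (hc₀ : 0 < c₀) (hc₁ : 0 ≤ c₁) (hs0 : 0 < s) (hs1 : s < 1)
    (hΔa : ∀ y : X, 0 ≤ Δa y)
    (hA1 : ∀ y : X, ∀ d : ℝ, 0 ≤ d → d ≤ Δa y →
      c₀ * C y * d - c₁ * d ^ (1 + s) ≤ pred y d)
    -- Assumption A (2), with R n := (1−σ)·pred(x n, Δ n) − |ared(x n, x (n+1)) − pred(x n, Δ n)|
    (c₂ Δb δ : ℝ) (hc₂ : c₁ ≤ c₂) (hΔb : 0 < Δb) (hδ : 0 < δ)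
    (hA2a : ∀ n, Δ n ≤ Δa (x n) →
      (1 - σ) * (c₀ * C (x n) * Δ n - c₂ * Δ n ^ (1 + s)) ≤
        (1 - σ) * pred (x n) (Δ n) -
          |(J (x n) - J (x (n + 1))) - pred (x n) (Δ n)|)
    (hA2b : ∀ n, Δa (x n) ≤ min (Δ n) Δb → δ ≤ pred (x n) (Δ n))
    (hA2c : ∀ n, Δa (x n) ≤ Δ n → Δ n ≤ Δb →
      δ ≤ (1 - σ) * pred (x n) (Δ n) -
        |(J (x n) - J (x (n + 1))) - pred (x n) (Δ n)|)
    -- Assumption A (3)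
    (Δc L : ℝ) (hΔc : 0 < Δc) (hL : 0 < L)
    (hA3 : ∀ n, dist (x n) (x (n + 1)) ≤ Δ n → Δ n ≤ Δc →
      δ ≤ pred (x n) (Δ n) ∨
        |C (x n) - C (x (n + 1))| ≤ L * dist (x n) (x (n + 1)))
    -- J bounded below on X
    (hJbdd : ∃ m : ℝ, ∀ y : X, m ≤ J y) :
    Tendsto (fun n => C (x n)) atTop (nhds 0) := by
  classical
  obtain ⟨mJ, hmJ⟩ := hJbdd
  have hσ1' : (0:ℝ) < 1 - σ := by linarith
  have h1s : (0:ℝ) < 1 + s := by linarith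
  have hc₂0 : (0:ℝ) ≤ c₂ := le_trans hc₁ hc₂
  -- positivity of pred along the iterates
  have hpred0 : ∀ y : X, 0 ≤ pred y 0 := by
    intro y
    have h := hA1 y 0 le_rfl (hΔa y)
    rw [Real.zero_rpow (by positivity : (1:ℝ)+s ≠ 0)] at h
    linarith
  have hpredpos : ∀ n, 0 < pred (x n) (Δ n) := by
    intro n
    have h := hpredmono (x n) 0 (Δ n) le_rfl (hΔpos n).le
    rcases lt_or_eq_of_le (le_trans (hpred0 (x n)) h) with h' | h'
    · exact h'
    · exact absurd h'.symm (hnoterm n)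
  -- J is nonincreasing along the iterates
  have hstepJ : ∀ n, J (x (n+1)) ≤ J (x n) := by
    intro n
    by_cases h : σ * pred (x n) (Δ n) ≤ J (x n) - J (xt n)
    · obtain ⟨hx', _⟩ := hsucc n h
      rw [hx']
      nlinarith [hpredpos n]
    · rw [(hfail n h).1]
  have hanti : Antitone fun n => J (x n) := antitone_nat_of_succ_le hstepJ
  -- on a failed step, R n = -(σ * pred)
  have hfailR : ∀ n, ¬ σ * pred (x n) (Δ n) ≤ J (x n) - J (xt n) →
      (1 - σ) * pred (x n) (Δ n) -
        |(J (x n) - J (x (n + 1))) - pred (x n) (Δ n)| = -(σ * pred (x n) (Δ n)) := by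
    intro n hn
    obtain ⟨hx', _⟩ := hfail n hn
    rw [hx', sub_self, zero_sub, abs_neg, abs_of_pos (hpredpos n)]
    ring
  -- a failed step with small radius bounds the criticality measure
  have hfailC : ∀ n, ¬ σ * pred (x n) (Δ n) ≤ J (x n) - J (xt n) → Δ n ≤ Δb →
      c₀ * C (x n) ≤ c₂ * Δ n ^ s := by
    intro n hn hnb
    rcases le_or_gt (Δa (x n)) (Δ n) with h | h
    · exfalso
      have h2 := hA2c n h hnb
      rw [hfailR n hn] at h2
      nlinarith [hpredpos n]
    · have h2 := hA2a n h.le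
      rw [hfailR n hn] at h2
      have hsplit : Δ n ^ (1+s) = Δ n * Δ n ^ s := by
        rw [Real.rpow_add (hΔpos n), Real.rpow_one]
      rw [hsplit] at h2
      have hlt : c₀ * C (x n) * Δ n < (c₂ * Δ n ^ s) * Δ n := by nlinarith [hpredpos n]
      exact le_of_lt ((mul_lt_mul_iff_of_pos_right (hΔpos n)).1 hlt)
  -- lower bound for pred when the criticality measure is bounded below
  have predLB : ∀ ε : ℝ, 0 < ε → ∀ n, ε ≤ C (x n) →
      δ ≤ pred (x n) (Δ n) ∨
        c₀ * ε / 2 * min (Δ n) (min Δb (min ((c₀*ε/(2*(c₁+1)))^((1:ℝ)/s)) Δc)) ≤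
          pred (x n) (Δ n) := by
    intro ε hε n hC
    rcases le_or_gt (Δa (x n)) (min (Δ n) Δb) with h | h
    · exact Or.inl (hA2b n h)
    · right
      set τ : ℝ := (c₀*ε/(2*(c₁+1)))^((1:ℝ)/s) with hτdef
      have hτpos : 0 < τ := Real.rpow_pos_of_pos (by positivity) _
      set d : ℝ := min (Δ n) (min Δb (min τ Δc)) with hddef
      have hdpos : 0 < d := lt_min (hΔpos n) (lt_min hΔb (lt_min hτpos hΔc))
      have hdΔ : d ≤ Δ n := min_le_left _ _
      have hdτ : d ≤ τ := le_trans (min_le_right _ _)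
        (le_trans (min_le_right _ _) (min_le_left _ _))
      have hdA : d ≤ Δa (x n) := by
        refine le_trans (le_min hdΔ ?_) h.le
        exact le_trans (min_le_right _ _) (min_le_left _ _)
      have h1 := hA1 (x n) d hdpos.le hdA
      have hτs : τ ^ s = c₀*ε/(2*(c₁+1)) := by
        rw [hτdef, ← Real.rpow_mul (by positivity), one_div,
          inv_mul_cancel₀ hs0.ne', Real.rpow_one]
      have hds : d ^ s ≤ τ ^ s := Real.rpow_le_rpow hdpos.le hdτ hs0.le
      have hdsplit : d ^ (1+s) = d * d ^ s := by
        rw [Real.rpow_add hdpos, Real.rpow_one]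
      have hc1τ : c₁ * τ ^ s ≤ c₀ * ε / 2 := by
        rw [hτs]
        rw [← mul_div_assoc, div_le_div_iff₀ (by positivity) (by norm_num : (0:ℝ) < 2)]
        nlinarith [mul_pos hc₀ hε]
      have hdnn : 0 ≤ d ^ s := Real.rpow_nonneg hdpos.le s
      have h2 : c₀ * ε / 2 * d ≤ pred (x n) d := by
        rw [hdsplit] at h1
        have hCd : c₀ * ε * d ≤ c₀ * C (x n) * d :=
          mul_le_mul_of_nonneg_right (mul_le_mul_of_nonneg_left hC hc₀.le) hdpos.le
        have h4 : c₁ * d ^ s ≤ c₀ * ε / 2 :=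
          le_trans (mul_le_mul_of_nonneg_left hds hc₁) hc1τ
        nlinarith [mul_le_mul_of_nonneg_left h4 hdpos.le]
      exact le_trans h2 (hpredmono (x n) d (Δ n) hdpos.le hdΔ)

  by_cases hfin : ∃ N, ∀ n, N ≤ n → ¬ σ * pred (x n) (Δ n) ≤ J (x n) - J (xt n)
  · -- Case 1: finitely many successful iterations
    obtain ⟨N, hN⟩ := hfin
    have hxc : ∀ k, x (N + k) = x N := by
      intro k
      induction k with
      | zero => rfl
      | succ k ih =>
        have h := (hfail (N + k) (hN _ (Nat.le_add_right _ _))).1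
        rw [← Nat.add_assoc] at *
        rw [h, ih]
    have hΔgeom : ∀ k, Δ (N + k) = Δ N / 2 ^ k := by
      intro k
      induction k with
      | zero => simp
      | succ k ih =>
        have h := (hfail (N + k) (hN _ (Nat.le_add_right _ _))).2
        rw [← Nat.add_assoc] at *
        rw [h, ih, pow_succ]
        ring
    have hC0 : C (x N) = 0 := by
      by_contra hne
      have hCpos : 0 < C (x N) := lt_of_le_of_ne (hCnonneg _) (Ne.symm hne)
      set θ : ℝ := min Δb ((c₀ * C (x N) / (2 * (c₂ + 1))) ^ ((1:ℝ)/s)) with hθdef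
      have hθpos : 0 < θ := lt_min hΔb (Real.rpow_pos_of_pos (by positivity) _)
      obtain ⟨k, hk⟩ := exists_pow_lt_of_lt_one (div_pos hθpos (hΔpos N))
        (show (1:ℝ)/2 < 1 by norm_num)
      have hΔk : Δ (N + k) < θ := by
        rw [hΔgeom k]
        calc Δ N / 2 ^ k = Δ N * (1/2) ^ k := by rw [div_pow, one_pow]; ring
          _ < Δ N * (θ / Δ N) := by
              exact mul_lt_mul_of_pos_left hk (hΔpos N)
          _ = θ := by rw [mul_comm, div_mul_cancel₀ _ (hΔpos N).ne']
      have hb := hfailC (N + k) (hN _ (Nat.le_add_right _ _))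
        (le_of_lt (lt_of_lt_of_le hΔk (min_le_left _ _)))
      rw [hxc k] at hb
      have hθs : ((c₀ * C (x N) / (2 * (c₂ + 1))) ^ ((1:ℝ)/s)) ^ s
          = c₀ * C (x N) / (2 * (c₂ + 1)) := by
        rw [← Real.rpow_mul (by positivity), one_div, inv_mul_cancel₀ hs0.ne', Real.rpow_one]
      have hΔs : Δ (N + k) ^ s ≤ c₀ * C (x N) / (2 * (c₂ + 1)) := by
        rw [← hθs]
        exact Real.rpow_le_rpow (hΔpos _).le
          (le_of_lt (lt_of_lt_of_le hΔk (min_le_right _ _))) hs0.le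
      have h5 : c₂ * Δ (N + k) ^ s ≤ c₂ * (c₀ * C (x N) / (2 * (c₂ + 1))) :=
        mul_le_mul_of_nonneg_left hΔs hc₂0
      have h6 : c₂ * (c₀ * C (x N) / (2 * (c₂ + 1))) ≤ c₀ * C (x N) / 2 := by
        rw [← mul_div_assoc, div_le_div_iff₀ (by positivity) (by norm_num : (0:ℝ) < 2)]
        nlinarith [mul_pos hc₀ hCpos]
      nlinarith [mul_pos hc₀ hCpos]
    have hev : ∀ᶠ n in atTop, (0:ℝ) = C (x n) := by
      rw [eventually_atTop]
      refine ⟨N, fun n hn => ?_⟩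
      obtain ⟨k, rfl⟩ := Nat.exists_eq_add_of_le hn
      rw [hxc k, hC0]
    exact Tendsto.congr' hev tendsto_const_nhds

  · -- Case 2: infinitely many successful iterations
    push_neg at hfin
    -- a positive real below Δmax
    obtain ⟨t₀, ht₀pos, ht₀le⟩ : ∃ t₀ : ℝ, 0 < t₀ ∧ ENNReal.ofReal t₀ ≤ Δmax := by
      rcases eq_or_ne Δmax ⊤ with h | h
      · exact ⟨1, one_pos, by simp [h]⟩
      · exact ⟨Δmax.toReal, ENNReal.toReal_pos hΔmax.ne' h, by rw [ENNReal.ofReal_toReal h]⟩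
    -- on a successful iteration the radius does not shrink below t₀
    have hΔsucc : ∀ n, σ * pred (x n) (Δ n) ≤ J (x n) - J (xt n) →
        min (Δ n) t₀ ≤ Δ (n+1) := by
      intro n hn
      obtain ⟨_, hΔ'⟩ := hsucc n hn
      rw [hΔ']
      have hnn : (0:ℝ) ≤ min (2 * Δ n) t₀ :=
        le_min (by nlinarith [hΔpos n]) ht₀pos.le
      have h1 : ENNReal.ofReal (min (2 * Δ n) t₀) ≤ min (ENNReal.ofReal (2 * Δ n)) Δmax :=
        le_min (ENNReal.ofReal_le_ofReal (min_le_left _ _))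
          (le_trans (ENNReal.ofReal_le_ofReal (min_le_right _ _)) ht₀le)
      have hfin' : min (ENNReal.ofReal (2 * Δ n)) Δmax ≠ ⊤ :=
        ne_top_of_le_ne_top ENNReal.ofReal_ne_top (min_le_left _ _)
      have h2 := ENNReal.toReal_mono hfin' h1
      rw [ENNReal.toReal_ofReal hnn] at h2
      have h3 : min (Δ n) t₀ ≤ min (2 * Δ n) t₀ :=
        min_le_min (by nlinarith [hΔpos n]) le_rfl
      linarith
    -- the criticality measure is frequently small
    have hfreq : ∀ ε : ℝ, 0 < ε → ∀ N, ∃ n, N ≤ n ∧ C (x n) < ε := by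
      intro ε hε N0
      by_contra hcon
      push_neg at hcon
      -- small radius forces success
      set θ : ℝ := min Δb ((c₀ * ε / (2 * (c₂ + 1))) ^ ((1:ℝ)/s)) with hθdef
      have hθpos : 0 < θ := lt_min hΔb (Real.rpow_pos_of_pos (by positivity) _)
      have hsml : ∀ n, N0 ≤ n → Δ n ≤ θ → σ * pred (x n) (Δ n) ≤ J (x n) - J (xt n) := by
        intro n hn hΔθ
        by_contra hns
        have hb := hfailC n hns (le_trans hΔθ (min_le_left _ _))
        have hθs : ((c₀ * ε / (2 * (c₂ + 1))) ^ ((1:ℝ)/s)) ^ s = c₀ * ε / (2 * (c₂ + 1)) := by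
          rw [← Real.rpow_mul (by positivity), one_div, inv_mul_cancel₀ hs0.ne', Real.rpow_one]
        have hΔs : Δ n ^ s ≤ c₀ * ε / (2 * (c₂ + 1)) := by
          rw [← hθs]
          exact Real.rpow_le_rpow (hΔpos n).le (le_trans hΔθ (min_le_right _ _)) hs0.le
        have h5 : c₂ * Δ n ^ s ≤ c₂ * (c₀ * ε / (2 * (c₂ + 1))) :=
          mul_le_mul_of_nonneg_left hΔs hc₂0
        have h6 : c₂ * (c₀ * ε / (2 * (c₂ + 1))) ≤ c₀ * ε / 2 := by
          rw [← mul_div_assoc, div_le_div_iff₀ (by positivity) (by norm_num : (0:ℝ) < 2)]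
          nlinarith [mul_pos hc₀ hε]
        have hCb := hcon n hn
        nlinarith [mul_pos hc₀ hε, mul_le_mul_of_nonneg_left hCb hc₀.le]
      -- radius lower bound
      set m' : ℝ := min (Δ N0) (min (θ / 2) t₀) with hm'def
      have hm'pos : 0 < m' := lt_min (hΔpos N0) (lt_min (by linarith) ht₀pos)
      have hΔlbd : ∀ n, N0 ≤ n → m' ≤ Δ n := by
        intro n hn
        induction n, hn using Nat.le_induction with
        | base => exact min_le_left _ _
        | succ n hn ih =>
          by_cases hS : σ * pred (x n) (Δ n) ≤ J (x n) - J (xt n)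
          · refine le_trans (le_min ih ?_) (hΔsucc n hS)
            exact le_trans (min_le_right _ _) (min_le_right _ _)
          · have hΔbig : θ < Δ n := by
              by_contra hle
              push_neg at hle
              exact hS (hsml n hn hle)
            rw [(hfail n hS).2]
            have : m' ≤ θ / 2 := le_trans (min_le_right _ _) (min_le_left _ _)
            linarith
      -- uniform lower bound on pred
      set τ : ℝ := min ((c₀*ε/(2*(c₁+1)))^((1:ℝ)/s)) Δc with hτdef
      have hτpos : 0 < τ := lt_min (Real.rpow_pos_of_pos (by positivity) _) hΔc
      set η : ℝ := min δ (c₀ * ε / 2 * min m' (min Δb τ)) with hηdef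
      have hηpos : 0 < η := by
        refine lt_min hδ ?_
        have : 0 < min m' (min Δb τ) := lt_min hm'pos (lt_min hΔb hτpos)
        positivity
      have hη : ∀ n, N0 ≤ n → η ≤ pred (x n) (Δ n) := by
        intro n hn
        rcases predLB ε hε n (hcon n hn) with h | h
        · exact le_trans (min_le_left _ _) h
        · refine le_trans (min_le_right _ _) (le_trans ?_ h)
          have h7 : min m' (min Δb τ) ≤ min (Δ n) (min Δb τ) :=
            min_le_min (hΔlbd n hn) le_rfl
          have h8 : 0 ≤ c₀ * ε / 2 := by positivity
          exact mul_le_mul_of_nonneg_left h7 h8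
      -- J decreases without bound: contradiction
      have hdesc : ∀ k : ℕ, ∃ n, N0 ≤ n ∧ J (x n) ≤ J (x N0) - k * (σ * η) := by
        intro k
        induction k with
        | zero => exact ⟨N0, le_rfl, by simp⟩
        | succ k ih =>
          obtain ⟨n, hn, hJn⟩ := ih
          obtain ⟨n', hn', hS⟩ := hfin n
          have h1 : J (x n') ≤ J (x n) := hanti hn'
          have h2 : σ * pred (x n') (Δ n') ≤ J (x n') - J (x (n'+1)) := by
            rw [(hsucc n' hS).1]; exact hS
          have h3 : η ≤ pred (x n') (Δ n') := hη n' (le_trans hn hn')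
          refine ⟨n' + 1, le_trans hn (le_trans hn' (Nat.le_succ _)), ?_⟩
          push_cast
          nlinarith
      obtain ⟨k, hk⟩ := exists_nat_gt ((J (x N0) - mJ) / (σ * η))
      obtain ⟨n, _, hJn⟩ := hdesc k
      have h9 := hmJ (x n)
      have h10 : (J (x N0) - mJ) / (σ * η) < k := hk
      rw [div_lt_iff₀ (by positivity)] at h10
      nlinarith
    -- limit of J along the iterates
    have hbdd : BddBelow (Set.range fun n => J (x n)) := by
      refine ⟨mJ, ?_⟩
      rintro _ ⟨n, rfl⟩
      exact hmJ _
    have hJten : Tendsto (fun n => J (x n)) atTop (nhds (⨅ n, J (x n))) :=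
      tendsto_atTop_ciInf hanti hbdd
    set Jinf : ℝ := ⨅ n, J (x n) with hJinfdef
    have hJlb : ∀ n, Jinf ≤ J (x n) := fun n => ciInf_le hbdd n
    -- prove the limit
    rw [Metric.tendsto_atTop]
    intro ε hε
    by_contra hcon
    push_neg at hcon
    have hbig : ∀ N, ∃ n, N ≤ n ∧ ε ≤ C (x n) := by
      intro N
      obtain ⟨n, hn, h⟩ := hcon N
      rw [Real.dist_eq, sub_zero, abs_of_nonneg (hCnonneg _)] at h
      exact ⟨n, hn, h⟩
    have hε2 : 0 < ε / 2 := by linarith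
    -- constants
    set τ : ℝ := min ((c₀*(ε/2)/(2*(c₁+1)))^((1:ℝ)/s)) Δc with hτdef
    have hτpos : 0 < τ := lt_min (Real.rpow_pos_of_pos (by positivity) _) hΔc
    set B : ℝ := min Δb τ with hBdef
    have hBpos : 0 < B := lt_min hΔb hτpos
    set γ : ℝ := min δ (c₀ * (ε/2) / 2 * B) with hγdef
    have hγpos : 0 < γ := lt_min hδ (by positivity)
    set K : ℝ := 2 * L / (c₀ * (ε/2) * σ) with hKdef
    have hKpos : 0 < K := by positivity
    set ρ : ℝ := min (σ * γ) (ε / (4 * K)) with hρdef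
    have hρpos : 0 < ρ := lt_min (by positivity) (by positivity)
    obtain ⟨N₁, hN₁⟩ := (Metric.tendsto_atTop.1 hJten) ρ hρpos
    have hN₁' : ∀ n, N₁ ≤ n → J (x n) - Jinf < ρ := by
      intro n hn
      have := hN₁ n hn
      rw [Real.dist_eq] at this
      exact lt_of_le_of_lt (le_abs_self _) this
    -- pointwise Lipschitz-type bound along the window
    have hpt : ∀ n, N₁ ≤ n → ε/2 ≤ C (x n) →
        |C (x n) - C (x (n+1))| ≤ K * (J (x n) - J (x (n+1))) := by
      intro n hn hCn
      by_cases hS : σ * pred (x n) (Δ n) ≤ J (x n) - J (xt n)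
      · obtain ⟨hx', _⟩ := hsucc n hS
        have hared : σ * pred (x n) (Δ n) ≤ J (x n) - J (x (n+1)) := by rw [hx']; exact hS
        have hpredγ : pred (x n) (Δ n) < γ := by
          have h1 : J (x n) - J (x (n+1)) ≤ J (x n) - Jinf := by linarith [hJlb (n+1)]
          have h2 : σ * pred (x n) (Δ n) < σ * γ :=
            lt_of_le_of_lt (le_trans hared h1)
              (lt_of_lt_of_le (hN₁' n hn) (min_le_left _ _))
          exact lt_of_mul_lt_mul_left h2 hσ0.le
        rcases predLB (ε/2) hε2 n hCn with h | h
        · have : γ ≤ δ := min_le_left _ _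
          linarith
        · have hγB : γ ≤ c₀ * (ε/2) / 2 * B := min_le_right _ _
          have hΔB : Δ n < B := by
            by_contra hge
            push_neg at hge
            rw [min_eq_right hge] at h
            linarith
          rw [min_eq_left hΔB.le] at h
          have hΔΔc : Δ n ≤ Δc :=
            le_trans hΔB.le (le_trans (min_le_right _ _) (min_le_right _ _))
          have hdist : dist (x n) (x (n+1)) ≤ Δ n := by rw [hx']; exact htrial n
          rcases hA3 n hdist hΔΔc with h3 | h3
          · have : γ ≤ δ := min_le_left _ _
            linarith
          · have hd0 : 0 ≤ dist (x n) (x (n+1)) := dist_nonneg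
            have h4 : |C (x n) - C (x (n+1))| ≤ L * Δ n :=
              le_trans h3 (mul_le_mul_of_nonneg_left hdist hL.le)
            -- L * Δ n ≤ K * σ * pred ≤ K * ared
            have h5 : L * Δ n ≤ K * (σ * pred (x n) (Δ n)) := by
              rw [hKdef]
              rw [div_mul_eq_mul_div, le_div_iff₀ (by positivity)]
              nlinarith [hL.le, mul_le_mul_of_nonneg_left h hL.le]
            have h6 : K * (σ * pred (x n) (Δ n)) ≤ K * (J (x n) - J (x (n+1))) :=
              mul_le_mul_of_nonneg_left hared hKpos.le
            linarith
      · rw [(hfail n hS).1]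
        simp [abs_nonneg]
    -- telescoping estimate
    have htel : ∀ m j : ℕ, N₁ ≤ m → (∀ i, i < j → ε/2 ≤ C (x (m + i))) →
        C (x m) - C (x (m + j)) ≤ K * (J (x m) - J (x (m + j))) := by
      intro m j hm
      induction j with
      | zero => intro _; simp
      | succ j ih =>
        intro hCw
        have h1 := ih fun i hi => hCw i (Nat.lt_succ_of_lt hi)
        have h2 := hpt (m + j) (le_trans hm (Nat.le_add_right _ _)) (hCw j (Nat.lt_succ_self _))
        have h3 : C (x (m+j)) - C (x (m+j+1)) ≤ |C (x (m+j)) - C (x (m+j+1))| := le_abs_self _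
        have he : m + (j+1) = (m + j) + 1 := rfl
        rw [he]
        linarith
    -- put everything together
    obtain ⟨m, hmN, hmC⟩ := hbig N₁
    obtain ⟨n₀, hn₀m, hn₀C⟩ := hfreq (ε/2) hε2 m
    have hPex : ∃ j, C (x (m + j)) < ε/2 := ⟨n₀ - m, by rwa [Nat.add_sub_cancel' hn₀m]⟩
    set j₀ := Nat.find hPex with hj₀def
    have hj₀ : C (x (m + j₀)) < ε/2 := Nat.find_spec hPex
    have hjlt : ∀ i, i < j₀ → ε/2 ≤ C (x (m + i)) := fun i hi =>
      le_of_not_gt (Nat.find_min hPex hi)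
    have hT := htel m j₀ hmN hjlt
    have h5 : J (x m) - J (x (m + j₀)) ≤ J (x m) - Jinf := by linarith [hJlb (m + j₀)]
    have h6 : J (x m) - Jinf < ρ := hN₁' m hmN
    have h7 : ρ ≤ ε / (4 * K) := min_le_right _ _
    have h8 : K * (J (x m) - J (x (m + j₀))) ≤ K * (ε / (4 * K)) := by
      refine mul_le_mul_of_nonneg_left ?_ hKpos.le
      linarith
    have h9 : K * (ε / (4 * K)) = ε / 4 := by
      field_simp
    nlinarith
end

section
/- Let the abstract trust-region setting and Assumption A hold, let J be bounded below on X, let C : X → [0,∞) be lower semi-continuous with respect to the metric d, and assume additionally Δ_a(x) > 0 for all x ∈ X. Then: (i) if the algorithm terminates at some iterate x̄ (because pred(x̄, Δ) = 0 at the current trust-region radius Δ > 0), then C(x̄) = 0; (ii) if the algorithm produces an infinite sequence of iterates, then every accumulation point x̄ of (x_n) with respect to d satisfies C(x̄) = 0; (iii) if moreover (X,d) is a compact metric space, at least one accumulation point exists. -/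
open Filter Topology

set_option maxHeartbeats 2000000 in
/-- If the criticality measure is lower semi-continuous and `Δ_a > 0` everywhere then:
(i) a point at which the algorithm would terminate (predicted reduction zero at a positive
radius) is stationary; (ii) every accumulation point of the iterates is stationary;
(iii) if the space is compact, at least one accumulation point exists. -/
theorem accumulation_points_stationary
    {X : Type*} [MetricSpace X]
    (J : X → ℝ) (C : X → ℝ) (pred : X → ℝ → ℝ)
    -- abstract trust-region setting
    (σ : ℝ) (hσ0 : 0 < σ) (hσ1 : σ < 1)
    (Δmax : ENNReal) (hΔmax : 0 < Δmax)
    (hCnonneg : ∀ y : X, 0 ≤ C y)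
    (hpredmono : ∀ y : X, ∀ d₁ d₂ : ℝ, 0 ≤ d₁ → d₁ ≤ d₂ → pred y d₁ ≤ pred y d₂)
    (x xt : ℕ → X) (Δ : ℕ → ℝ) (hΔpos : ∀ n, 0 < Δ n)
    (htrial : ∀ n, dist (x n) (xt n) ≤ Δ n)
    -- the algorithm never terminates, i.e., produces an infinite sequence of iterates
    (hnoterm : ∀ n, pred (x n) (Δ n) ≠ 0)
    -- successful iteration: accept the trial point and double the radius (capped at Δmax)
    (hsucc : ∀ n, σ * pred (x n) (Δ n) ≤ J (x n) - J (xt n) →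
      x (n + 1) = xt n ∧ Δ (n + 1) = (min (ENNReal.ofReal (2 * Δ n)) Δmax).toReal)
    -- unsuccessful iteration: keep the iterate and halve the radius
    (hfail : ∀ n, ¬ σ * pred (x n) (Δ n) ≤ J (x n) - J (xt n) →
      x (n + 1) = x n ∧ Δ (n + 1) = Δ n / 2)
    -- Assumption A (1)
    (c₀ c₁ s : ℝ) (Δa : X → ℝ)
    (hc₀ : 0 < c₀) (hc₁ : 0 ≤ c₁) (hs0 : 0 < s) (hs1 : s < 1)
    (hΔa : ∀ y : X, 0 ≤ Δa y)
    (hA1 : ∀ y : X, ∀ d : ℝ, 0 ≤ d → d ≤ Δa y →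
      c₀ * C y * d - c₁ * d ^ (1 + s) ≤ pred y d)
    -- Assumption A (2), with R n := (1−σ)·pred(x n, Δ n) − |ared(x n, x (n+1)) − pred(x n, Δ n)|
    (c₂ Δb δ : ℝ) (hc₂ : c₁ ≤ c₂) (hΔb : 0 < Δb) (hδ : 0 < δ)
    (hA2a : ∀ n, Δ n ≤ Δa (x n) →
      (1 - σ) * (c₀ * C (x n) * Δ n - c₂ * Δ n ^ (1 + s)) ≤
        (1 - σ) * pred (x n) (Δ n) -
          |(J (x n) - J (x (n + 1))) - pred (x n) (Δ n)|)
    (hA2b : ∀ n, Δa (x n) ≤ min (Δ n) Δb → δ ≤ pred (x n) (Δ n))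
    (hA2c : ∀ n, Δa (x n) ≤ Δ n → Δ n ≤ Δb →
      δ ≤ (1 - σ) * pred (x n) (Δ n) -
        |(J (x n) - J (x (n + 1))) - pred (x n) (Δ n)|)
    -- Assumption A (3)
    (Δc L : ℝ) (hΔc : 0 < Δc) (hL : 0 < L)
    (hA3 : ∀ n, dist (x n) (x (n + 1)) ≤ Δ n → Δ n ≤ Δc →
      δ ≤ pred (x n) (Δ n) ∨
        |C (x n) - C (x (n + 1))| ≤ L * dist (x n) (x (n + 1)))
    -- J bounded below on X
    (hJbdd : ∃ m : ℝ, ∀ y : X, m ≤ J y)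
    -- C is lower semi-continuous with respect to the metric d
    (hlsc : LowerSemicontinuous C)
    -- Δ_a is positive everywhere
    (hΔapos : ∀ y : X, 0 < Δa y) :
    -- (i) if the algorithm terminates at xbar because pred(xbar, Δ) = 0 for the current
    --     trust-region radius Δ > 0, then C(xbar) = 0;
    (∀ xbar : X, ∀ d : ℝ, 0 < d → pred xbar d = 0 → C xbar = 0) ∧
    -- (ii) every accumulation point xbar of the (infinite) sequence of iterates satisfies C(xbar) = 0;
    (∀ xbar : X, (∃ φ : ℕ → ℕ, StrictMono φ ∧
        Tendsto (fun k => x (φ k)) atTop (nhds xbar)) → C xbar = 0) ∧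
    -- (iii) if (X,d) is compact, at least one accumulation point exists
    (CompactSpace X → ∃ xbar : X, ∃ φ : ℕ → ℕ, StrictMono φ ∧
        Tendsto (fun k => x (φ k)) atTop (nhds xbar)) := by
  obtain ⟨mlow, hml⟩ := hJbdd
  have hc₂' : 0 ≤ c₂ := hc₁.trans hc₂
  -- a helper to produce small radii where the curvature term is dominated
  have htau : ∀ a : ℝ, 0 ≤ a → ∀ b : ℝ, 0 < b → ∃ τ : ℝ, 0 < τ ∧ a * τ ^ s ≤ b := by
    intro a ha b hb
    rcases eq_or_lt_of_le ha with h | h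
    · exact ⟨1, one_pos, by rw [← h]; simpa using hb.le⟩
    · refine ⟨(b / a) ^ s⁻¹, Real.rpow_pos_of_pos (div_pos hb h) _, ?_⟩
      rw [← Real.rpow_mul (div_pos hb h).le, inv_mul_cancel₀ hs0.ne', Real.rpow_one,
        mul_comm, div_mul_cancel₀ b h.ne']
  -- pred is nonnegative at nonnegative radii
  have hpred0 : ∀ y : X, ∀ d : ℝ, 0 ≤ d → 0 ≤ pred y d := by
    intro y d hd
    have h0 : (0:ℝ) ≤ pred y 0 := by
      have h := hA1 y 0 le_rfl (hΔa y)
      rw [Real.zero_rpow (by positivity : (1:ℝ) + s ≠ 0)] at h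
      linarith
    linarith [hpredmono y 0 d le_rfl hd]
  have hpredn : ∀ n, 0 < pred (x n) (Δ n) :=
    fun n => lt_of_le_of_ne (hpred0 _ _ (hΔpos n).le) (Ne.symm (hnoterm n))
  -- the actual reduction is nonnegative at every iteration
  have hared : ∀ n, 0 ≤ J (x n) - J (x (n + 1)) := by
    intro n
    by_cases h : σ * pred (x n) (Δ n) ≤ J (x n) - J (xt n)
    · rw [(hsucc n h).1]
      nlinarith [hpredn n]
    · rw [(hfail n h).1]
      simp
  -- Part (i)
  have part1 : ∀ xbar : X, ∀ d : ℝ, 0 < d → pred xbar d = 0 → C xbar = 0 := by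
    intro xb d hd hp
    by_contra hC0
    have hCpos : 0 < C xb := lt_of_le_of_ne (hCnonneg xb) (Ne.symm hC0)
    obtain ⟨τ, hτ0, hτs⟩ := htau c₁ hc₁ (c₀ * C xb / 2) (by positivity)
    set m := min d (min (Δa xb) τ) with hmdef
    have hm0 : 0 < m := lt_min hd (lt_min (hΔapos xb) hτ0)
    have h1 := hA1 xb m hm0.le ((min_le_right _ _).trans (min_le_left _ _))
    have h2 : pred xb m ≤ 0 := by
      rw [← hp]; exact hpredmono xb m d hm0.le (min_le_left _ _)
    have hexp : m ^ (1 + s) = m * m ^ s := by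
      rw [Real.rpow_add hm0, Real.rpow_one]
    have hms : m ^ s ≤ τ ^ s :=
      Real.rpow_le_rpow hm0.le ((min_le_right _ _).trans (min_le_right _ _)) hs0.le
    rw [hexp] at h1
    have ea : m * m ^ s ≤ m * τ ^ s := mul_le_mul_of_nonneg_left hms hm0.le
    have eb : c₁ * (m * m ^ s) ≤ c₁ * (m * τ ^ s) := mul_le_mul_of_nonneg_left ea hc₁
    have ec : c₁ * (m * τ ^ s) = c₁ * τ ^ s * m := by ring
    have ed : c₁ * τ ^ s * m ≤ c₀ * C xb / 2 * m := mul_le_mul_of_nonneg_right hτs hm0.le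
    have epos : 0 < c₀ * C xb / 2 * m := by positivity
    linarith
  refine ⟨part1, ?_, ?_⟩
  · -- Part (ii)
    rintro xbar ⟨φ, hφmono, hφlim⟩
    by_contra hC0
    have hCpos : 0 < C xbar := lt_of_le_of_ne (hCnonneg xbar) (Ne.symm hC0)
    set ε := C xbar / 2 with hεdef
    have hεpos : 0 < ε := by positivity
    obtain ⟨r, hr, hball⟩ : ∃ r > 0, ∀ ⦃y : X⦄, dist y xbar < r → ε < C y := by
      have hev := hlsc xbar ε (by rw [hεdef]; linarith)
      rwa [Metric.eventually_nhds_iff] at hev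
    obtain ⟨τ, hτ0, hτs⟩ := htau c₂ hc₂' (c₀ * ε / 2) (by positivity)
    set T := min Δb τ with hTdef
    have hTpos : 0 < T := lt_min hΔb hτ0
    set K := 2 / (σ * c₀ * ε) with hKdef
    have hKpos : 0 < K := by positivity
    set astar := σ * min δ (c₀ * ε / 2 * T) with hastardef
    have hastarpos : 0 < astar := mul_pos hσ0 (lt_min hδ (by positivity))
    -- lower bound for pred at iterates with large criticality measure
    have hP : ∀ n, ε ≤ C (x n) →
        min δ (c₀ * ε / 2 * min (Δ n) T) ≤ pred (x n) (Δ n) := by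
      intro n hCn
      set m := min (Δ n) T with hmdef
      have hm0 : 0 < m := lt_min (hΔpos n) hTpos
      have hmΔ : m ≤ Δ n := min_le_left _ _
      by_cases hma : m ≤ Δa (x n)
      · have h1 := hA1 (x n) m hm0.le hma
        have hexp : m ^ (1 + s) = m * m ^ s := by
          rw [Real.rpow_add hm0, Real.rpow_one]
        have hms : m ^ s ≤ τ ^ s :=
          Real.rpow_le_rpow hm0.le ((min_le_right _ _).trans (min_le_right _ _)) hs0.le
        rw [hexp] at h1
        have ea : m * m ^ s ≤ m * τ ^ s := mul_le_mul_of_nonneg_left hms hm0.le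
        have eb : c₁ * (m * m ^ s) ≤ c₂ * (m * m ^ s) :=
          mul_le_mul_of_nonneg_right hc₂
            (mul_nonneg hm0.le (Real.rpow_nonneg hm0.le s))
        have eb2 : c₂ * (m * m ^ s) ≤ c₂ * (m * τ ^ s) := mul_le_mul_of_nonneg_left ea hc₂'
        have ec : c₂ * (m * τ ^ s) = c₂ * τ ^ s * m := by ring
        have ed : c₂ * τ ^ s * m ≤ c₀ * ε / 2 * m := mul_le_mul_of_nonneg_right hτs hm0.le
        have ee : c₀ * ε * m ≤ c₀ * C (x n) * m :=
          mul_le_mul_of_nonneg_right (mul_le_mul_of_nonneg_left hCn hc₀.le) hm0.le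
        have key : c₀ * ε / 2 * m ≤ pred (x n) m := by linarith
        calc min δ (c₀ * ε / 2 * m) ≤ c₀ * ε / 2 * m := min_le_right _ _
          _ ≤ pred (x n) m := key
          _ ≤ pred (x n) (Δ n) := hpredmono _ _ _ hm0.le hmΔ
      · push_neg at hma
        have hd : Δa (x n) ≤ min (Δ n) Δb :=
          le_min (hma.le.trans hmΔ) (hma.le.trans ((min_le_right _ _).trans (min_le_left _ _)))
        exact (min_le_left _ _).trans (hA2b n hd)
    -- forced success at small radii near high criticality
    have hFS : ∀ n, ε ≤ C (x n) → Δ n ≤ T →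
        σ * pred (x n) (Δ n) ≤ J (x n) - J (xt n) := by
      intro n hCn hΔT
      by_contra hs
      have hx1 := (hfail n hs).1
      have hared0 : J (x n) - J (x (n + 1)) = 0 := by rw [hx1]; ring
      have habs : |(J (x n) - J (x (n + 1))) - pred (x n) (Δ n)| = pred (x n) (Δ n) := by
        rw [hared0, zero_sub, abs_neg, abs_of_nonneg (hpred0 _ _ (hΔpos n).le)]
      by_cases hma : Δ n ≤ Δa (x n)
      · have h1 := hA2a n hma
        rw [habs] at h1
        have hexp : Δ n ^ (1 + s) = Δ n * Δ n ^ s := by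
          rw [Real.rpow_add (hΔpos n), Real.rpow_one]
        have hms : Δ n ^ s ≤ τ ^ s :=
          Real.rpow_le_rpow (hΔpos n).le (hΔT.trans (min_le_right _ _)) hs0.le
        have hpos : 0 < c₀ * C (x n) * Δ n - c₂ * Δ n ^ (1 + s) := by
          rw [hexp]
          have e1 : c₂ * (Δ n * Δ n ^ s) ≤ c₂ * (Δ n * τ ^ s) :=
            mul_le_mul_of_nonneg_left (mul_le_mul_of_nonneg_left hms (hΔpos n).le) hc₂'
          have e2 : c₂ * (Δ n * τ ^ s) = c₂ * τ ^ s * Δ n := by ring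
          have e3 : c₂ * τ ^ s * Δ n ≤ c₀ * ε / 2 * Δ n :=
            mul_le_mul_of_nonneg_right hτs (hΔpos n).le
          have e4 : c₀ * ε * Δ n ≤ c₀ * C (x n) * Δ n :=
            mul_le_mul_of_nonneg_right (mul_le_mul_of_nonneg_left hCn hc₀.le) (hΔpos n).le
          have e5 : 0 < c₀ * ε * Δ n := mul_pos (mul_pos hc₀ hεpos) (hΔpos n)
          linarith
        have hσ' : 0 < 1 - σ := by linarith
        linarith [mul_pos hσ' hpos, mul_pos hσ0 (hpredn n)]
      · push_neg at hma
        have h1 := hA2c n hma.le (hΔT.trans (min_le_left _ _))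
        rw [habs] at h1
        linarith [mul_pos hσ0 (hpredn n)]
    -- on a successful iteration with small actual reduction, the radius is controlled
    have hSB' : ∀ n, ε ≤ C (x n) → J (x n) - J (x (n + 1)) < astar →
        σ * pred (x n) (Δ n) ≤ J (x n) - J (xt n) →
        Δ n ≤ K * (J (x n) - J (x (n + 1))) := by
      intro n hCn hlt hs
      have hared' : σ * pred (x n) (Δ n) ≤ J (x n) - J (x (n + 1)) := by
        rw [(hsucc n hs).1]; exact hs
      have hpl := hP n hCn
      have hΔT : Δ n ≤ T := by
        by_contra hgt
        push_neg at hgt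
        rw [min_eq_right hgt.le] at hpl
        have h2 : astar ≤ J (x n) - J (x (n + 1)) :=
          le_trans (mul_le_mul_of_nonneg_left hpl hσ0.le) hared'
        linarith
      rw [min_eq_left hΔT] at hpl
      rcases le_total δ (c₀ * ε / 2 * Δ n) with hcase | hcase
      · exfalso
        rw [min_eq_left hcase] at hpl
        have h2 : σ * δ ≤ J (x n) - J (x (n + 1)) :=
          le_trans (mul_le_mul_of_nonneg_left hpl hσ0.le) hared'
        have h3 : min δ (c₀ * ε / 2 * T) ≤ δ := min_le_left _ _
        nlinarith
      · rw [min_eq_right hcase] at hpl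
        have h2 : σ * (c₀ * ε / 2 * Δ n) ≤ J (x n) - J (x (n + 1)) :=
          le_trans (mul_le_mul_of_nonneg_left hpl hσ0.le) hared'
        rw [hKdef, div_mul_eq_mul_div, le_div_iff₀ (by positivity)]
        nlinarith
    -- distance moved is controlled by the actual reduction
    have hSB : ∀ n, ε ≤ C (x n) → J (x n) - J (x (n + 1)) < astar →
        dist (x n) (x (n + 1)) ≤ K * (J (x n) - J (x (n + 1))) := by
      intro n hCn hlt
      by_cases hs : σ * pred (x n) (Δ n) ≤ J (x n) - J (xt n)
      · calc dist (x n) (x (n + 1)) = dist (x n) (xt n) := by rw [(hsucc n hs).1]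
          _ ≤ Δ n := htrial n
          _ ≤ K * (J (x n) - J (x (n + 1))) := hSB' n hCn hlt hs
      · rw [(hfail n hs).1]
        simp [dist_self]
    -- J along the iterates converges
    have hanti : Antitone fun n => J (x n) :=
      antitone_nat_of_succ_le fun n => by linarith [hared n]
    have hbdd : BddBelow (Set.range fun n => J (x n)) := by
      refine ⟨mlow, ?_⟩
      rintro y ⟨n, rfl⟩
      exact hml (x n)
    have hJtend : Tendsto (fun n => J (x n)) atTop (𝓝 (⨅ n, J (x n))) :=
      tendsto_atTop_ciInf hanti hbdd
    set Jinf := ⨅ n, J (x n) with hJinfdef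
    have hJinfle : ∀ n, Jinf ≤ J (x n) := fun n => ciInf_le hbdd n
    have haredlim : Tendsto (fun n => J (x n) - J (x (n + 1))) atTop (𝓝 0) := by
      have h2 : Tendsto (fun n => J (x (n + 1))) atTop (𝓝 Jinf) :=
        hJtend.comp (tendsto_add_atTop_nat 1)
      have h3 := hJtend.sub h2
      simpa using h3
    obtain ⟨N₀, hN₀⟩ := eventually_atTop.mp (haredlim.eventually_lt_const hastarpos)
    -- choose a late subsequence index
    have hE1 : ∀ᶠ k in atTop, dist (x (φ k)) xbar < r / 2 :=
      Metric.tendsto_nhds.mp hφlim (r / 2) (by positivity)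
    have hE2 : ∀ᶠ k in atTop, J (x (φ k)) - Jinf < r / (2 * K) := by
      have hc : Tendsto (fun k => J (x (φ k))) atTop (𝓝 Jinf) :=
        hJtend.comp hφmono.tendsto_atTop
      have hc2 : Tendsto (fun k => J (x (φ k)) - Jinf) atTop (𝓝 0) := by
        simpa using hc.sub_const Jinf
      exact hc2.eventually_lt_const (by positivity)
    have hE3 : ∀ᶠ k in atTop, N₀ ≤ φ k := hφmono.tendsto_atTop.eventually_ge_atTop N₀
    obtain ⟨k, ⟨hk1, hk2⟩, hk3⟩ := ((hE1.and hE2).and hE3).exists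
    set t := φ k with htdef
    have haredsmall : ∀ n, t ≤ n → J (x n) - J (x (n + 1)) < astar :=
      fun n hn => hN₀ n (hk3.trans hn)
    -- the trap: iterates never leave the ball around xbar
    have ball_of : ∀ n, dist xbar (x n) ≤ dist xbar (x t) + K * (J (x t) - J (x n)) →
        dist xbar (x n) < r := by
      intro n h1
      have h2 : K * (J (x t) - J (x n)) ≤ K * (J (x t) - Jinf) :=
        mul_le_mul_of_nonneg_left (by linarith [hJinfle n]) hKpos.le
      have h3 : K * (J (x t) - Jinf) < K * (r / (2 * K)) :=
        mul_lt_mul_of_pos_left hk2 hKpos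
      have h4 : K * (r / (2 * K)) = r / 2 := by
        field_simp
      rw [dist_comm xbar (x t)] at h1
      linarith
    have trap : ∀ n, t ≤ n →
        dist xbar (x n) ≤ dist xbar (x t) + K * (J (x t) - J (x n)) := by
      intro n hn
      induction n, hn using Nat.le_induction with
      | base => simp
      | succ n hn ih =>
        have hb : dist xbar (x n) < r := ball_of n ih
        have hCn : ε ≤ C (x n) := by
          have := hball (by rwa [dist_comm] : dist (x n) xbar < r)
          linarith
        have hstep : dist (x n) (x (n + 1)) ≤ K * (J (x n) - J (x (n + 1))) :=
          hSB n hCn (haredsmall n hn)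
        calc dist xbar (x (n + 1)) ≤ dist xbar (x n) + dist (x n) (x (n + 1)) :=
              dist_triangle _ _ _
          _ ≤ dist xbar (x t) + K * (J (x t) - J (x n)) + K * (J (x n) - J (x (n + 1))) := by
              linarith
          _ = dist xbar (x t) + K * (J (x t) - J (x (n + 1))) := by ring
    have hCball : ∀ n, t ≤ n → ε ≤ C (x n) := by
      intro n hn
      have hb : dist xbar (x n) < r := ball_of n (trap n hn)
      have := hball (by rwa [dist_comm] : dist (x n) xbar < r)
      linarith
    -- define the effective doubling threshold
    obtain ⟨T', hT'pos, hT'T, h2T⟩ :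
        ∃ T' : ℝ, 0 < T' ∧ T' ≤ T ∧ (Δmax ≠ ⊤ → 2 * T' ≤ Δmax.toReal) := by
      by_cases htop : Δmax = ⊤
      · exact ⟨T, hTpos, le_rfl, fun h => absurd htop h⟩
      · have hM : 0 < Δmax.toReal := ENNReal.toReal_pos hΔmax.ne' htop
        refine ⟨min T (Δmax.toReal / 2), lt_min hTpos (by linarith), min_le_left _ _, ?_⟩
        intro _
        have : min T (Δmax.toReal / 2) ≤ Δmax.toReal / 2 := min_le_right _ _
        linarith
    -- on a successful step, the new radius is at least min (2Δ n) (2T')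
    have hΔnext : ∀ n, σ * pred (x n) (Δ n) ≤ J (x n) - J (xt n) →
        min (2 * Δ n) (2 * T') ≤ Δ (n + 1) := by
      intro n hs
      have h2 := (hsucc n hs).2
      by_cases htop : Δmax = ⊤
      · rw [h2, htop]
        rw [min_eq_left le_top, ENNReal.toReal_ofReal (by linarith [hΔpos n])]
        exact min_le_left _ _
      · rw [h2, ENNReal.toReal_min ENNReal.ofReal_ne_top htop,
          ENNReal.toReal_ofReal (by linarith [hΔpos n])]
        exact min_le_min le_rfl (h2T htop)
    -- the radius is bounded below along the tail
    have hLB : ∀ n, t ≤ n → min (Δ t) (T' / 2) ≤ Δ n := by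
      intro n hn
      induction n, hn using Nat.le_induction with
      | base => exact min_le_left _ _
      | succ n hn ih =>
        by_cases hs : σ * pred (x n) (Δ n) ≤ J (x n) - J (xt n)
        · refine le_trans (le_min ?_ ?_) (hΔnext n hs)
          · linarith [hΔpos n, ih]
          · exact (min_le_right _ _).trans (by linarith)
        · have hTlt : T < Δ n := by
            by_contra hle
            push_neg at hle
            exact hs (hFS n (hCball n hn) hle)
          rw [(hfail n hs).2]
          have : T' / 2 ≤ Δ n / 2 := by linarith [hT'T]
          exact (min_le_right _ _).trans this
    -- but the radius gets arbitrarily small along the tail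
    have hsmall : ∀ e : ℝ, 0 < e → ∃ n, t ≤ n ∧ Δ n < e := by
      intro e he
      by_contra hno
      push_neg at hno
      have hev : ∀ᶠ n in atTop, K * (J (x n) - J (x (n + 1))) < e := by
        have h1 : Tendsto (fun n => K * (J (x n) - J (x (n + 1)))) atTop (𝓝 (K * 0)) :=
          haredlim.const_mul K
        rw [mul_zero] at h1
        exact h1.eventually_lt_const he
      obtain ⟨N₂', hN₂'⟩ := eventually_atTop.mp hev
      set N₂ := max N₂' t with hN₂def
      have hallfail : ∀ n, N₂ ≤ n → ¬ σ * pred (x n) (Δ n) ≤ J (x n) - J (xt n) := by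
        intro n hn hs
        have hnt : t ≤ n := (le_max_right _ _).trans hn
        have h1 : Δ n ≤ K * (J (x n) - J (x (n + 1))) :=
          hSB' n (hCball n hnt) (haredsmall n hnt) hs
        have h2 := hN₂' n ((le_max_left _ _).trans hn)
        have h3 := hno n hnt
        linarith
      have hhalf : ∀ j : ℕ, Δ (N₂ + j) = Δ N₂ / 2 ^ j := by
        intro j
        induction j with
        | zero => simp
        | succ j ih =>
          have h1 := (hfail (N₂ + j) (hallfail _ (Nat.le_add_right _ _))).2
          rw [show N₂ + (j + 1) = (N₂ + j) + 1 from rfl, h1, ih]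
          ring
      obtain ⟨j, hj⟩ := pow_unbounded_of_one_lt (Δ N₂ / e) (one_lt_two (α := ℝ))
      have hjlt : Δ (N₂ + j) < e := by
        rw [hhalf j, div_lt_iff₀ (by positivity)]
        rw [div_lt_iff₀ he] at hj
        linarith
      exact absurd (hno (N₂ + j) ((le_max_right _ _).trans (Nat.le_add_right _ _))) (not_le.mpr hjlt)
    obtain ⟨n, hn, hlt⟩ :=
      hsmall (min (Δ t) (T' / 2)) (lt_min (hΔpos t) (by linarith))
    exact absurd (hLB n hn) (not_le.mpr hlt)
  · -- Part (iii)
    intro hcomp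
    obtain ⟨xbar, -, φ, hφ, hlim⟩ :=
      isCompact_univ.tendsto_subseq (fun n => Set.mem_univ (x n))
    exact ⟨xbar, φ, hφ, hlim⟩
end

section
/- Let the abstract trust-region setting and Assumption A hold and let J be bounded below on X. If the trust-region algorithm produces an infinite sequence of iterates (x_n), then liminf_{n→∞} C(x_n) = 0. -/
open Filter

set_option maxHeartbeats 1000000 in
/-- The liminf of the criticality measure along the iterates of the abstract
trust-region algorithm (without trust-region radius reset) is zero under Assumption A,
provided `J` is bounded below and the algorithm produces an infinite sequence of iterates. -/
theorem criticality_liminf_zero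
    {X : Type*} [MetricSpace X]
    (J : X → ℝ) (C : X → ℝ) (pred : X → ℝ → ℝ)
    -- abstract trust-region setting
    (σ : ℝ) (hσ0 : 0 < σ) (hσ1 : σ < 1)
    (Δmax : ENNReal) (hΔmax : 0 < Δmax)
    (hCnonneg : ∀ y : X, 0 ≤ C y)
    (hpredmono : ∀ y : X, ∀ d₁ d₂ : ℝ, 0 ≤ d₁ → d₁ ≤ d₂ → pred y d₁ ≤ pred y d₂)
    (x xt : ℕ → X) (Δ : ℕ → ℝ) (hΔpos : ∀ n, 0 < Δ n)
    (htrial : ∀ n, dist (x n) (xt n) ≤ Δ n)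
    -- the algorithm never terminates, i.e., produces an infinite sequence of iterates
    (hnoterm : ∀ n, pred (x n) (Δ n) ≠ 0)
    -- successful iteration: accept the trial point and double the radius (capped at Δmax)
    (hsucc : ∀ n, σ * pred (x n) (Δ n) ≤ J (x n) - J (xt n) →
      x (n + 1) = xt n ∧ Δ (n + 1) = (min (ENNReal.ofReal (2 * Δ n)) Δmax).toReal)
    -- unsuccessful iteration: keep the iterate and halve the radius
    (hfail : ∀ n, ¬ σ * pred (x n) (Δ n) ≤ J (x n) - J (xt n) →
      x (n + 1) = x n ∧ Δ (n + 1) = Δ n / 2)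
    -- Assumption A (1)
    (c₀ c₁ s : ℝ) (Δa : X → ℝ)
    (hc₀ : 0 < c₀) (hc₁ : 0 ≤ c₁) (hs0 : 0 < s) (hs1 : s < 1)
    (hΔa : ∀ y : X, 0 ≤ Δa y)
    (hA1 : ∀ y : X, ∀ d : ℝ, 0 ≤ d → d ≤ Δa y →
      c₀ * C y * d - c₁ * d ^ (1 + s) ≤ pred y d)
    -- Assumption A (2), with R n := (1−σ)·pred(x n, Δ n) − |ared(x n, x (n+1)) − pred(x n, Δ n)|
    (c₂ Δb δ : ℝ) (hc₂ : c₁ ≤ c₂) (hΔb : 0 < Δb) (hδ : 0 < δ)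
    (hA2a : ∀ n, Δ n ≤ Δa (x n) →
      (1 - σ) * (c₀ * C (x n) * Δ n - c₂ * Δ n ^ (1 + s)) ≤
        (1 - σ) * pred (x n) (Δ n) -
          |(J (x n) - J (x (n + 1))) - pred (x n) (Δ n)|)
    (hA2b : ∀ n, Δa (x n) ≤ min (Δ n) Δb → δ ≤ pred (x n) (Δ n))
    (hA2c : ∀ n, Δa (x n) ≤ Δ n → Δ n ≤ Δb →
      δ ≤ (1 - σ) * pred (x n) (Δ n) -
        |(J (x n) - J (x (n + 1))) - pred (x n) (Δ n)|)
    -- Assumption A (3)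
    (Δc L : ℝ) (hΔc : 0 < Δc) (hL : 0 < L)
    (hA3 : ∀ n, dist (x n) (x (n + 1)) ≤ Δ n → Δ n ≤ Δc →
      δ ≤ pred (x n) (Δ n) ∨
        |C (x n) - C (x (n + 1))| ≤ L * dist (x n) (x (n + 1)))
    -- J bounded below on X
    (hJbdd : ∃ m : ℝ, ∀ y : X, m ≤ J y) :
    atTop.liminf (fun n => ENNReal.ofReal (C (x n))) = 0 := by
  classical
  -- pred is positive along the iterates
  have hpredpos : ∀ n, 0 < pred (x n) (Δ n) := by
    intro n
    have h0 : (0:ℝ) ≤ pred (x n) 0 := by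
      have h := hA1 (x n) 0 le_rfl (hΔa (x n))
      have hz : (0:ℝ) ^ (1 + s) = 0 := Real.zero_rpow (by positivity)
      rw [hz] at h
      linarith
    have h1 : pred (x n) 0 ≤ pred (x n) (Δ n) :=
      hpredmono _ 0 _ le_rfl (hΔpos n).le
    exact lt_of_le_of_ne (le_trans h0 h1) (Ne.symm (hnoterm n))
  -- J is nonincreasing along iterates
  have hJstep : ∀ n, J (x (n + 1)) ≤ J (x n) := by
    intro n
    by_cases hc : σ * pred (x n) (Δ n) ≤ J (x n) - J (xt n)
    · rw [(hsucc n hc).1]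
      have := mul_pos hσ0 (hpredpos n)
      linarith
    · rw [(hfail n hc).1]
  have hJle : ∀ p q, p ≤ q → J (x q) ≤ J (x p) := by
    intro p q hpq
    induction q, hpq using Nat.le_induction with
    | base => exact le_rfl
    | succ n hn ih => exact (hJstep n).trans ih
  -- contradiction setup
  by_contra hne
  have hlpos : 0 < atTop.liminf (fun n => ENNReal.ofReal (C (x n))) :=
    lt_of_le_of_ne zero_le (Ne.symm hne)
  obtain ⟨a, ha0, halt⟩ := exists_between hlpos
  have hatop : a ≠ ⊤ := (lt_of_lt_of_le halt le_top).ne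
  have hev := eventually_lt_of_lt_liminf halt
  obtain ⟨N, hN⟩ := eventually_atTop.1 hev
  set ε : ℝ := a.toReal with hεdef
  have hε : 0 < ε := ENNReal.toReal_pos ha0.ne' hatop
  have hCε : ∀ n, N ≤ n → ε ≤ C (x n) := by
    intro n hn
    have h := (ENNReal.lt_ofReal_iff_toReal_lt hatop).1 (hN n hn)
    linarith
  have hc₂0 : (0:ℝ) ≤ c₂ := hc₁.trans hc₂
  -- the threshold radius below which every iteration succeeds
  have hc₂' : (0:ℝ) < c₂ + 1 := by linarith
  have hq2 : 0 < c₀ * ε / (c₂ + 1) := by positivity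
  set ε₂ : ℝ := (c₀ * ε / (c₂ + 1)) ^ s⁻¹ with hε₂def
  have hε₂pos : 0 < ε₂ := Real.rpow_pos_of_pos hq2 _
  have hε₂s : ε₂ ^ s = c₀ * ε / (c₂ + 1) := Real.rpow_inv_rpow hq2.le (ne_of_gt hs0)
  set Δstar : ℝ := min Δb ε₂ with hΔstardef
  have hΔstarpos : 0 < Δstar := lt_min hΔb hε₂pos
  have hsmall : ∀ n, N ≤ n → Δ n ≤ Δstar →
      σ * pred (x n) (Δ n) ≤ J (x n) - J (xt n) := by
    intro n hn hΔ
    by_contra hno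
    have hx1 : x (n + 1) = x n := (hfail n hno).1
    have hR : (1 - σ) * pred (x n) (Δ n) -
        |(J (x n) - J (x (n + 1))) - pred (x n) (Δ n)| = -(σ * pred (x n) (Δ n)) := by
      rw [hx1]
      have he : (J (x n) - J (x n)) - pred (x n) (Δ n) = -(pred (x n) (Δ n)) := by ring
      rw [he, abs_neg, abs_of_pos (hpredpos n)]
      ring
    by_cases hcase : Δ n ≤ Δa (x n)
    · have h2 := hA2a n hcase
      rw [hR] at h2
      have hΔs : (Δ n) ^ s ≤ c₀ * ε / (c₂ + 1) := by
        rw [← hε₂s]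
        exact Real.rpow_le_rpow (hΔpos n).le (hΔ.trans (min_le_right _ _)) hs0.le
      have hΔexp : (Δ n) ^ (1 + s) = Δ n * (Δ n) ^ s := by
        rw [Real.rpow_add (hΔpos n), Real.rpow_one]
      have hqid : (c₂ + 1) * (c₀ * ε / (c₂ + 1)) = c₀ * ε := by field_simp
      have h6 : ε ≤ C (x n) := hCε n hn
      have t0 : Δ n * (Δ n) ^ s ≤ Δ n * (c₀ * ε / (c₂ + 1)) :=
        mul_le_mul_of_nonneg_left hΔs (hΔpos n).le
      have t1 : c₂ * (Δ n * (Δ n) ^ s) ≤ c₂ * (Δ n * (c₀ * ε / (c₂ + 1))) :=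
        mul_le_mul_of_nonneg_left t0 hc₂0
      have t2 : c₂ * (Δ n * (c₀ * ε / (c₂ + 1))) ≤ Δ n * (c₀ * ε) := by
        have hle : c₂ * (c₀ * ε / (c₂ + 1)) ≤ c₀ * ε := by
          have h := mul_le_mul_of_nonneg_right
            (show c₂ ≤ c₂ + 1 by linarith) hq2.le
          rw [hqid] at h
          exact h
        calc c₂ * (Δ n * (c₀ * ε / (c₂ + 1)))
            = Δ n * (c₂ * (c₀ * ε / (c₂ + 1))) := by ring
          _ ≤ Δ n * (c₀ * ε) := mul_le_mul_of_nonneg_left hle (hΔpos n).le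
      have t3 : c₀ * ε * Δ n ≤ c₀ * C (x n) * Δ n :=
        mul_le_mul_of_nonneg_right (mul_le_mul_of_nonneg_left h6 hc₀.le) (hΔpos n).le
      have h3 : 0 ≤ c₀ * C (x n) * Δ n - c₂ * Δ n ^ (1 + s) := by
        rw [hΔexp]
        have e : Δ n * (c₀ * ε) = c₀ * ε * Δ n := by ring
        linarith
      have h4 := mul_nonneg (show (0:ℝ) ≤ 1 - σ by linarith) h3
      have h5 : (1 - σ) * (c₀ * C (x n) * Δ n - c₂ * Δ n ^ (1 + s)) =
          (1 - σ) * c₀ * C (x n) * Δ n - (1 - σ) * (c₂ * Δ n ^ (1 + s)) := by ring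
      have h6' := mul_pos hσ0 (hpredpos n)
      linarith
    · push_neg at hcase
      have h2 := hA2c n hcase.le (hΔ.trans (min_le_left _ _))
      rw [hR] at h2
      have := mul_pos hσ0 (hpredpos n)
      linarith
  -- lower bound on the radius
  set Tm : ℝ := if Δmax = ⊤ then Δ N else Δmax.toReal with hTmdef
  have hTmpos : 0 < Tm := by
    rw [hTmdef]
    split
    · exact hΔpos N
    · exact ENNReal.toReal_pos (ne_of_gt hΔmax) ‹_›
  set m : ℝ := min (min (Δ N) (Δstar / 2)) Tm with hmdef
  have hmpos : 0 < m := lt_min (lt_min (hΔpos N) (by linarith)) hTmpos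
  have hΔlow : ∀ n, N ≤ n → m ≤ Δ n := by
    intro n hn
    induction n, hn using Nat.le_induction with
    | base => exact (min_le_left _ _).trans (min_le_left _ _)
    | succ n hn ih =>
      by_cases hc : σ * pred (x n) (Δ n) ≤ J (x n) - J (xt n)
      · have hΔeq := (hsucc n hc).2
        by_cases htop : Δmax = ⊤
        · rw [htop, min_eq_left le_top, ENNReal.toReal_ofReal (by linarith [hΔpos n])] at hΔeq
          rw [hΔeq]
          linarith [hΔpos n]
        · rw [ENNReal.toReal_min ENNReal.ofReal_ne_top htop,
            ENNReal.toReal_ofReal (by linarith [hΔpos n])] at hΔeq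
          rw [hΔeq]
          refine le_min (by linarith [hΔpos n]) ?_
          have hTm : Tm = Δmax.toReal := if_neg htop
          rw [← hTm]
          exact min_le_right _ _
      · have hΔeq := (hfail n hc).2
        have hbig : Δstar < Δ n := by
          by_contra hle
          push_neg at hle
          exact hc (hsmall n hn hle)
        have hm2 : m ≤ Δstar / 2 := (min_le_left _ _).trans (min_le_right _ _)
        rw [hΔeq]
        linarith
  -- uniform lower bound on pred along the iterates
  have hc₁' : (0:ℝ) < c₁ + 1 := by linarith
  have hq1 : 0 < c₀ * ε / (c₁ + 1) := by positivity
  set ε₁ : ℝ := (c₀ * ε / (c₁ + 1)) ^ s⁻¹ with hε₁def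
  have hε₁pos : 0 < ε₁ := Real.rpow_pos_of_pos hq1 _
  have hε₁s : ε₁ ^ s = c₀ * ε / (c₁ + 1) := Real.rpow_inv_rpow hq1.le (ne_of_gt hs0)
  set d₀ : ℝ := min (min m Δb) ε₁ with hd₀def
  have hd₀pos : 0 < d₀ := lt_min (lt_min hmpos hΔb) hε₁pos
  set η : ℝ := min δ (d₀ * (c₀ * ε / (c₁ + 1))) with hηdef
  have hηpos : 0 < η := lt_min hδ (by positivity)
  have hpredlb : ∀ n, N ≤ n → η ≤ pred (x n) (Δ n) := by
    intro n hn
    by_cases hcase : Δa (x n) ≤ min (Δ n) Δb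
    · exact (min_le_left _ _).trans (hA2b n hcase)
    · push_neg at hcase
      set d : ℝ := min (min (Δ n) Δb) ε₁ with hddef
      have hd0 : 0 < d := lt_min (lt_min (hΔpos n) hΔb) hε₁pos
      have hdΔa : d ≤ Δa (x n) := ((min_le_left _ _).trans_lt hcase).le
      have hdΔ : d ≤ Δ n := (min_le_left _ _).trans (min_le_left _ _)
      have hmono := hpredmono (x n) d (Δ n) hd0.le hdΔ
      have hA := hA1 (x n) d hd0.le hdΔa
      have hds : d ^ s ≤ c₀ * ε / (c₁ + 1) := by
        rw [← hε₁s]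
        exact Real.rpow_le_rpow hd0.le (min_le_right _ _) hs0.le
      have hdexp : d ^ (1 + s) = d * d ^ s := by
        rw [Real.rpow_add hd0, Real.rpow_one]
      have hdd₀ : d₀ ≤ d := by
        rw [hddef, hd₀def]
        exact min_le_min (min_le_min (hΔlow n hn) le_rfl) le_rfl
      have hqid : (c₁ + 1) * (c₀ * ε / (c₁ + 1)) = c₀ * ε := by field_simp
      have h6 : ε ≤ C (x n) := hCε n hn
      have t0 : d * d ^ s ≤ d * (c₀ * ε / (c₁ + 1)) :=
        mul_le_mul_of_nonneg_left hds hd0.le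
      have t1 : c₁ * (d * d ^ s) ≤ c₁ * (d * (c₀ * ε / (c₁ + 1))) :=
        mul_le_mul_of_nonneg_left t0 hc₁
      have t3 : c₀ * ε * d ≤ c₀ * C (x n) * d :=
        mul_le_mul_of_nonneg_right (mul_le_mul_of_nonneg_left h6 hc₀.le) hd0.le
      have t4 : c₀ * ε * d - c₁ * (d * (c₀ * ε / (c₁ + 1))) = d * (c₀ * ε / (c₁ + 1)) := by
        field_simp
        ring
      have t5 : d₀ * (c₀ * ε / (c₁ + 1)) ≤ d * (c₀ * ε / (c₁ + 1)) :=
        mul_le_mul_of_nonneg_right hdd₀ hq1.le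
      have hη2 : η ≤ d₀ * (c₀ * ε / (c₁ + 1)) := min_le_right _ _
      rw [hdexp] at hA
      linarith
  -- infinitely many successful iterations
  have hexists_succ : ∀ M : ℕ, ∃ n, M ≤ n ∧
      σ * pred (x n) (Δ n) ≤ J (x n) - J (xt n) := by
    intro M
    by_contra hno
    push_neg at hno
    set M' : ℕ := max M N with hM'def
    have hfails : ∀ k : ℕ, Δ (M' + k) = Δ M' / 2 ^ k := by
      intro k
      induction k with
      | zero => simp
      | succ k ih =>
        have hlt := hno (M' + k) (le_trans (le_max_left _ _) (Nat.le_add_right _ _))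
        have h := (hfail (M' + k) (not_le.mpr hlt)).2
        have hidx : M' + (k + 1) = (M' + k) + 1 := by ring
        rw [hidx, h, ih]
        ring
    obtain ⟨k, hk⟩ := pow_unbounded_of_one_lt (Δ M' / Δstar) (one_lt_two (α := ℝ))
    have hk2 : Δ M' < Δstar * 2 ^ k := by
      rw [div_lt_iff₀ hΔstarpos] at hk
      linarith
    have hΔk : Δ (M' + k) ≤ Δstar := by
      rw [hfails k]
      rw [div_le_iff₀ (by positivity)]
      linarith
    have hsucck := hsmall (M' + k) (le_trans (le_max_right _ _) (Nat.le_add_right _ _)) hΔk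
    exact absurd hsucck (not_le.mpr (hno (M' + k)
      (le_trans (le_max_left _ _) (Nat.le_add_right _ _))))
  -- descent: J decreases without bound, contradiction with boundedness
  have hdescent : ∀ k : ℕ, ∃ n, N ≤ n ∧ J (x n) ≤ J (x N) - k * (σ * η) := by
    intro k
    induction k with
    | zero => exact ⟨N, le_rfl, by simp⟩
    | succ k ih =>
      obtain ⟨n, hn, hJn⟩ := ih
      obtain ⟨n', hn', hS⟩ := hexists_succ n
      have hNn' : N ≤ n' := hn.trans hn'
      have hx1 : x (n' + 1) = xt n' := (hsucc n' hS).1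
      have hpl := hpredlb n' hNn'
      have hstep : J (x (n' + 1)) ≤ J (x n') - σ * η := by
        rw [hx1]
        have := mul_le_mul_of_nonneg_left hpl hσ0.le
        linarith
      have hchain : J (x n') ≤ J (x n) := hJle n n' hn'
      refine ⟨n' + 1, hNn'.trans (Nat.le_succ _), ?_⟩
      push_cast
      linarith
  obtain ⟨mJ, hmJ⟩ := hJbdd
  obtain ⟨k, hk⟩ := exists_nat_gt ((J (x N) - mJ) / (σ * η))
  obtain ⟨n, hn, hJn⟩ := hdescent k
  have hk2 : J (x N) - mJ < k * (σ * η) := by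
    rw [div_lt_iff₀ (by positivity)] at hk
    linarith
  have := hmJ (x n)
  linarith
end

section
/- Let the abstract trust-region setting and Assumption A hold. Let (n_k) be a subsequence of successful iterations of the trust-region algorithm (i.e., ared(x_{n_k}, x̃_{n_k}) ≥ σ·pred(x_{n_k}, Δ_{n_k}) for all k). If limsup_{k→∞} Δ_{n_k} > 0 and liminf_{k→∞} C(x_{n_k}) > 0, then there exist δ' > 0 and an infinite subsequence (n_{k_ℓ}) of (n_k) such that pred(x_{n_{k_ℓ}}, Δ_{n_{k_ℓ}}) ≥ δ' for all ℓ. -/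
open Filter

/-- Along a subsequence of successful iterations whose trust-region radii do not tend to
zero and whose criticality measures stay bounded away from zero, the predicted reduction
is bounded below by a positive constant along a further subsequence. -/
theorem successful_subseq_pred_bounded_below
    {X : Type*} [MetricSpace X]
    (J : X → ℝ) (C : X → ℝ) (pred : X → ℝ → ℝ)
    -- abstract trust-region setting
    (σ : ℝ) (hσ0 : 0 < σ) (hσ1 : σ < 1)
    (Δmax : ENNReal) (hΔmax : 0 < Δmax)
    (hCnonneg : ∀ y : X, 0 ≤ C y)
    (hpredmono : ∀ y : X, ∀ d₁ d₂ : ℝ, 0 ≤ d₁ → d₁ ≤ d₂ → pred y d₁ ≤ pred y d₂)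
    (x xt : ℕ → X) (Δ : ℕ → ℝ) (hΔpos : ∀ n, 0 < Δ n)
    (htrial : ∀ n, dist (x n) (xt n) ≤ Δ n)
    -- the algorithm never terminates, i.e., produces an infinite sequence of iterates
    (hnoterm : ∀ n, pred (x n) (Δ n) ≠ 0)
    -- successful iteration: accept the trial point and double the radius (capped at Δmax)
    (hsucc : ∀ n, σ * pred (x n) (Δ n) ≤ J (x n) - J (xt n) →
      x (n + 1) = xt n ∧ Δ (n + 1) = (min (ENNReal.ofReal (2 * Δ n)) Δmax).toReal)
    -- unsuccessful iteration: keep the iterate and halve the radius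
    (hfail : ∀ n, ¬ σ * pred (x n) (Δ n) ≤ J (x n) - J (xt n) →
      x (n + 1) = x n ∧ Δ (n + 1) = Δ n / 2)
    -- Assumption A (1)
    (c₀ c₁ s : ℝ) (Δa : X → ℝ)
    (hc₀ : 0 < c₀) (hc₁ : 0 ≤ c₁) (hs0 : 0 < s) (hs1 : s < 1)
    (hΔa : ∀ y : X, 0 ≤ Δa y)
    (hA1 : ∀ y : X, ∀ d : ℝ, 0 ≤ d → d ≤ Δa y →
      c₀ * C y * d - c₁ * d ^ (1 + s) ≤ pred y d)
    -- Assumption A (2), with R n := (1−σ)·pred(x n, Δ n) − |ared(x n, x (n+1)) − pred(x n, Δ n)|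
    (c₂ Δb δ : ℝ) (hc₂ : c₁ ≤ c₂) (hΔb : 0 < Δb) (hδ : 0 < δ)
    (hA2a : ∀ n, Δ n ≤ Δa (x n) →
      (1 - σ) * (c₀ * C (x n) * Δ n - c₂ * Δ n ^ (1 + s)) ≤
        (1 - σ) * pred (x n) (Δ n) -
          |(J (x n) - J (x (n + 1))) - pred (x n) (Δ n)|)
    (hA2b : ∀ n, Δa (x n) ≤ min (Δ n) Δb → δ ≤ pred (x n) (Δ n))
    (hA2c : ∀ n, Δa (x n) ≤ Δ n → Δ n ≤ Δb →
      δ ≤ (1 - σ) * pred (x n) (Δ n) -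
        |(J (x n) - J (x (n + 1))) - pred (x n) (Δ n)|)
    -- Assumption A (3)
    (Δc L : ℝ) (hΔc : 0 < Δc) (hL : 0 < L)
    (hA3 : ∀ n, dist (x n) (x (n + 1)) ≤ Δ n → Δ n ≤ Δc →
      δ ≤ pred (x n) (Δ n) ∨
        |C (x n) - C (x (n + 1))| ≤ L * dist (x n) (x (n + 1)))
    -- (n_k) is a subsequence of successful iterations
    (nk : ℕ → ℕ) (hnk : StrictMono nk)
    (hnksucc : ∀ k, σ * pred (x (nk k)) (Δ (nk k)) ≤ J (x (nk k)) - J (xt (nk k)))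
    -- limsup_k Δ_{n_k} > 0 and liminf_k C(x_{n_k}) > 0
    (hlimsup : 0 < atTop.limsup (fun k => ENNReal.ofReal (Δ (nk k))))
    (hliminf : 0 < atTop.liminf (fun k => ENNReal.ofReal (C (x (nk k))))) :
    ∃ δ' : ℝ, 0 < δ' ∧ ∃ kl : ℕ → ℕ, StrictMono kl ∧
      ∀ l : ℕ, δ' ≤ pred (x (nk (kl l))) (Δ (nk (kl l))) := by
  obtain ⟨b, hb0, hblt⟩ := exists_between hlimsup
  have hbne : b ≠ ⊤ := by
    intro h; rw [h] at hblt; exact not_top_lt hblt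
  have hε0 : 0 < b.toReal := ENNReal.toReal_pos hb0.ne' hbne
  obtain ⟨cb, hcb0, hcblt⟩ := exists_between hliminf
  have hcbne : cb ≠ ⊤ := by
    intro h; rw [h] at hcblt; exact not_top_lt hcblt
  set ε := b.toReal with hεdef
  set c := cb.toReal with hcdef
  have hc0 : 0 < c := ENNReal.toReal_pos hcb0.ne' hcbne
  have hfreq : ∃ᶠ k in atTop, b < ENNReal.ofReal (Δ (nk k)) :=
    Filter.frequently_lt_of_lt_limsup (by isBoundedDefault) hblt
  have hev : ∀ᶠ k in atTop, cb < ENNReal.ofReal (C (x (nk k))) :=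
    Filter.eventually_lt_of_lt_liminf hcblt
  have hfreq2 : ∃ᶠ k in atTop, ε < Δ (nk k) ∧ c < C (x (nk k)) := by
    refine (hfreq.and_eventually hev).mono ?_
    rintro k ⟨h1, h2⟩
    exact ⟨(ENNReal.lt_ofReal_iff_toReal_lt hbne).mp h1,
      (ENNReal.lt_ofReal_iff_toReal_lt hcbne).mp h2⟩
  obtain ⟨kl, hklmono, hkl⟩ := Filter.extraction_of_frequently_atTop hfreq2
  set A : ℝ := c₀ * c / (2 * (c₁ + 1)) with hAdef
  have hA0 : 0 < A := by positivity
  set d : ℝ := min ε (min Δb (A ^ (1 / s))) with hddef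
  have hd0 : 0 < d := by
    apply lt_min hε0
    apply lt_min hΔb
    positivity
  refine ⟨min δ (c₀ * c * d / 2), lt_min hδ (by positivity), kl, hklmono, ?_⟩
  intro l
  set n := nk (kl l) with hn
  obtain ⟨hΔε, hCc⟩ := hkl l
  by_cases hcase : Δa (x n) ≤ min (Δ n) Δb
  · exact le_trans (min_le_left _ _) (hA2b n hcase)
  · push_neg at hcase
    have hdΔa : d ≤ Δa (x n) := by
      refine le_of_lt (lt_of_le_of_lt ?_ hcase)
      exact le_min (le_trans (min_le_left _ _) hΔε.le)
        (le_trans (min_le_right _ _) (min_le_left _ _))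
    have h1 := hA1 (x n) d hd0.le hdΔa
    have hds : d ^ (s : ℝ) ≤ A := by
      have h2 : d ^ (s : ℝ) ≤ (A ^ (1 / s)) ^ (s : ℝ) :=
        Real.rpow_le_rpow hd0.le
          (le_trans (min_le_right _ _) (min_le_right _ _)) hs0.le
      rwa [← Real.rpow_mul hA0.le, one_div, inv_mul_cancel₀ hs0.ne',
        Real.rpow_one] at h2
    have hsplit : d ^ (1 + s : ℝ) = d * d ^ (s : ℝ) := by
      rw [Real.rpow_add hd0, Real.rpow_one]
    have hkey : c₀ * c * d / 2 ≤ c₀ * C (x n) * d - c₁ * d ^ (1 + s : ℝ) := by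
      rw [hsplit]
      have hAc : (c₁ + 1) * A = c₀ * c / 2 := by
        rw [hAdef]; field_simp
      have hb1 : c₁ * (d * d ^ (s : ℝ)) ≤ (c₁ + 1) * (d * A) := by
        have h0s : 0 ≤ d ^ (s : ℝ) := Real.rpow_nonneg hd0.le s
        have h2 : c₁ * d * d ^ (s : ℝ) ≤ c₁ * d * A :=
          mul_le_mul_of_nonneg_left hds (by positivity)
        nlinarith [mul_nonneg hd0.le hA0.le]
      have hAc2 : (c₁ + 1) * (d * A) = c₀ * c * d / 2 := by
        rw [show (c₁ + 1) * (d * A) = d * ((c₁ + 1) * A) by ring, hAc]; ring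
      have hCd : c₀ * c * d ≤ c₀ * C (x n) * d :=
        mul_le_mul_of_nonneg_right
          (mul_le_mul_of_nonneg_left hCc.le hc₀.le) hd0.le
      linarith
    have hmono := hpredmono (x n) d (Δ n) hd0.le
      (le_trans (min_le_left _ _) hΔε.le)
    calc min δ (c₀ * c * d / 2) ≤ c₀ * c * d / 2 := min_le_right _ _
      _ ≤ c₀ * C (x n) * d - c₁ * d ^ (1 + s : ℝ) := hkey
      _ ≤ pred (x n) d := h1
      _ ≤ pred (x n) (Δ n) := hmono
end

section
/- Let w̄ ∈ BV_W(0,1) with jump points t_1 < ⋯ < t_{n(w̄)} and jump heights v_i − v_{i−1}. Suppose F : L¹(0,1) → ℝ is Fréchet differentiable, its gradient ∇F : L¹(0,1) → L^∞(0,1) is Lipschitz continuous, and ∇F(w̄) has a continuous representative g on [0,1]. If w̄ is a local minimizer of J(w) = F(w) + TV(w) over BV_W(0,1) with respect to the L¹-distance, i.e., there exists r > 0 such that F(w̄) + TV(w̄) ≤ F(w) + TV(w) for all w ∈ BV_W(0,1) with ‖w − w̄‖_{L¹(0,1)} ≤ r, then Σ_{i=1}^{n(w̄)} |g(t_i)|·|v_i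 − v_{i−1}| = 0, i.e., g vanishes at every jump point of w̄. -/
open MeasureTheory Set Filter

/-- Data of a piecewise constant function on `(0,1)` with values in a finite set
`W ⊂ ℤ`: jump points `0 = t 0 < t 1 < ⋯ < t n < t (n+1) = 1` and values
`v 0, …, v n ∈ W` with `v (i-1) ≠ v i`, so that the function equals `v i` on
`(t i, t (i+1))`.  This represents a member of `BV_W(0,1)`. -/
structure PCFun (W : Finset ℤ) where
  n : ℕ
  t : ℕ → ℝ
  v : ℕ → ℤ
  t_zero : t 0 = 0
  t_last : t (n + 1) = 1
  t_mono : ∀ i, i ≤ n → t i < t (i + 1)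
  v_mem : ∀ i, i ≤ n → v i ∈ W
  v_ne : ∀ i, i < n → v i ≠ v (i + 1)

namespace PCFun

variable {W : Finset ℤ}

/-- The piecewise constant function represented by the data (the values at the
finitely many jump points are irrelevant for a.e. purposes). -/
noncomputable def fn (p : PCFun W) : ℝ → ℝ := fun x =>
  ∑ i ∈ Finset.range (p.n + 1), if x ∈ Set.Ioo (p.t i) (p.t (i + 1)) then (p.v i : ℝ) else 0

/-- The total variation `TV(w) = Σ_{i=1}^{n(w)} |v_i − v_{i−1}|`. -/
noncomputable def tv (p : PCFun W) : ℝ :=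
  ∑ i ∈ Finset.range p.n, |(p.v (i + 1) : ℝ) - (p.v i : ℝ)|

/-- The `L¹(0,1)` distance between two piecewise constant functions. -/
noncomputable def distL1 (p q : PCFun W) : ℝ :=
  ∫ x in Set.Ioo (0 : ℝ) 1, |p.fn x - q.fn x|

/-- The criticality measure `C(w) = Σ_{i=1}^{n(w)} |g(t_i)|·|v_i − v_{i−1}|`, where `g`
is the continuous representative of `∇F(w)`. -/
noncomputable def crit (g : ℝ → ℝ) (p : PCFun W) : ℝ :=
  ∑ i ∈ Finset.range p.n, |g (p.t (i + 1))| * |(p.v (i + 1) : ℝ) - (p.v i : ℝ)|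

/-- The objective of the trust-region subproblem at `w = p` with gradient (representative)
`g`, evaluated at the trial point `q`:  `∫₀¹ g·(v − w) + TV(v) − TV(w)`. -/
noncomputable def linObj (g : ℝ → ℝ) (p q : PCFun W) : ℝ :=
  (∫ x in Set.Ioo (0 : ℝ) 1, g x * (q.fn x - p.fn x)) + q.tv - p.tv

/-- The predicted reduction `pred(w,Δ)`: the negative of the optimal value of the
trust-region subproblem `min ∫₀¹ g·(v − w) + TV(v) − TV(w)` over
`v ∈ BV_W(0,1)` with `‖v − w‖_{L¹} ≤ Δ`. -/
noncomputable def pred (g : ℝ → ℝ) (p : PCFun W) (Δ : ℝ) : ℝ :=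
  - sInf {r : ℝ | ∃ q : PCFun W, q.distL1 p ≤ Δ ∧ r = linObj g p q}

/-- `Δ_a(w)`: the minimum, over jump points of `w`, of the distance from that jump
point to the nearest neighboring jump point of `w` of opposite sign or to the
boundary of `(0,1)` (set to `1` if `w` has no jumps). -/
noncomputable def deltaA (p : PCFun W) : ℝ :=
  if p.n = 0 then 1
  else sInf
    ({r : ℝ | ∃ i < p.n, r = p.t (i + 1) ∨ r = 1 - p.t (i + 1)} ∪
     {r : ℝ | ∃ i < p.n, ∃ j < p.n,
        ((p.v (i + 1) - p.v i < 0 ∧ 0 < p.v (j + 1) - p.v j) ∨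
         (0 < p.v (i + 1) - p.v i ∧ p.v (j + 1) - p.v j < 0)) ∧
        r = |p.t (j + 1) - p.t (i + 1)|})

end PCFun

namespace PCFun
variable {W : Finset ℤ}

lemma t_lt (p : PCFun W) : ∀ {j k : ℕ}, j < k → k ≤ p.n + 1 → p.t j < p.t k := by
  intro j k hjk hk
  induction k with
  | zero => omega
  | succ k ih =>
    rcases Nat.lt_succ_iff_lt_or_eq.mp hjk with h | h
    · exact lt_trans (ih h (by omega)) (p.t_mono k (by omega))
    · subst h; exact p.t_mono j (by omega)

lemma t_le (p : PCFun W) {j k : ℕ} (hjk : j ≤ k) (hk : k ≤ p.n + 1) : p.t j ≤ p.t k := by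
  rcases eq_or_lt_of_le hjk with h | h
  · subst h; rfl
  · exact (p.t_lt h hk).le

/-- Move the `(i+1)`-st jump point of `p` to `B'`. -/
noncomputable def moveJump (p : PCFun W) (i : ℕ) (hi : i < p.n) (B' : ℝ)
    (h1 : p.t i < B') (h2 : B' < p.t (i + 2)) : PCFun W where
  n := p.n
  t := Function.update p.t (i + 1) B'
  v := p.v
  t_zero := by rw [Function.update_of_ne (by omega)]; exact p.t_zero
  t_last := by rw [Function.update_of_ne (by omega)]; exact p.t_last
  t_mono := by
    intro j hj
    rcases eq_or_ne j i with rfl | hji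
    · rw [Function.update_of_ne (by omega), Function.update_self]; exact h1
    · rcases eq_or_ne j (i+1) with rfl | hji1
      · rw [Function.update_self, Function.update_of_ne (by omega)]; exact h2
      · rw [Function.update_of_ne (by omega), Function.update_of_ne (by omega)]
        exact p.t_mono j hj
  v_mem := p.v_mem
  v_ne := p.v_ne

@[simp] lemma moveJump_n (p : PCFun W) (i : ℕ) (hi : i < p.n) (B' : ℝ) (h1 : p.t i < B')
    (h2 : B' < p.t (i + 2)) : (p.moveJump i hi B' h1 h2).n = p.n := rfl
@[simp] lemma moveJump_v (p : PCFun W) (i : ℕ) (hi : i < p.n) (B' : ℝ) (h1 : p.t i < B')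
    (h2 : B' < p.t (i + 2)) : (p.moveJump i hi B' h1 h2).v = p.v := rfl
@[simp] lemma moveJump_t (p : PCFun W) (i : ℕ) (hi : i < p.n) (B' : ℝ) (h1 : p.t i < B')
    (h2 : B' < p.t (i + 2)) : (p.moveJump i hi B' h1 h2).t = Function.update p.t (i + 1) B' := rfl

lemma moveJump_tv (p : PCFun W) (i : ℕ) (hi : i < p.n) (B' : ℝ)
    (h1 : p.t i < B') (h2 : B' < p.t (i + 2)) :
    (p.moveJump i hi B' h1 h2).tv = p.tv := rfl

lemma fn_sub_eq (p : PCFun W) (i : ℕ) (hi : i < p.n) (B' : ℝ)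
    (h1 : p.t i < B') (h2 : B' < p.t (i + 2)) (x : ℝ)
    (hx1 : x ≠ p.t (i + 1)) (hx2 : x ≠ B') :
    (p.moveJump i hi B' h1 h2).fn x - p.fn x =
      (if x ∈ Set.Ioo (p.t (i + 1)) B' then ((p.v i : ℝ) - (p.v (i + 1) : ℝ)) else 0)
      + (if x ∈ Set.Ioo B' (p.t (i + 1)) then ((p.v (i + 1) : ℝ) - (p.v i : ℝ)) else 0) := by
  have hAB : p.t i < p.t (i+1) := p.t_mono i (by omega)
  have hBC : p.t (i+1) < p.t (i+2) := p.t_mono (i+1) (by omega)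
  simp only [fn, moveJump_n, moveJump_v, moveJump_t]
  rw [← Finset.sum_sub_distrib]
  have hsub : ({i, i+1} : Finset ℕ) ⊆ Finset.range (p.n + 1) := by
    intro j hj; simp at hj; rcases hj with rfl | rfl <;> simp <;> omega
  rw [← Finset.sum_subset hsub (by
    intro j _ hj2
    simp only [Finset.mem_insert, Finset.mem_singleton] at hj2
    push_neg at hj2
    simp only [Function.update_of_ne (show j ≠ i + 1 by omega),
      Function.update_of_ne (show j + 1 ≠ i + 1 by omega)]
    ring)]
  rw [Finset.sum_pair (by omega : i ≠ i + 1)]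
  simp only [Function.update_of_ne (show i ≠ i+1 by omega), Function.update_self,
    Function.update_of_ne (show i+1+1 ≠ i+1 by omega)]
  set A := p.t i
  set B := p.t (i + 1)
  set C := p.t (i + 2)
  set a := (p.v i : ℝ)
  set b := (p.v (i+1) : ℝ)
  by_cases hm : B < x ∧ x < B'
  · rw [if_pos (Set.mem_Ioo.mpr ⟨lt_trans hAB hm.1, hm.2⟩),
      if_neg (fun hc : x ∈ Set.Ioo A B => absurd hc.2 (not_lt.mpr hm.1.le)),
      if_neg (fun hc : x ∈ Set.Ioo B' C => absurd hc.1 (not_lt.mpr hm.2.le)),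
      if_pos (Set.mem_Ioo.mpr ⟨hm.1, lt_trans hm.2 h2⟩),
      if_pos (Set.mem_Ioo.mpr hm),
      if_neg (fun hc : x ∈ Set.Ioo B' B => absurd hc.2 (not_lt.mpr hm.1.le))]
    ring
  · by_cases hm2 : B' < x ∧ x < B
    · rw [if_neg (fun hc : x ∈ Set.Ioo A B' => absurd hc.2 (not_lt.mpr hm2.1.le)),
        if_pos (Set.mem_Ioo.mpr ⟨lt_trans h1 hm2.1, hm2.2⟩),
        if_pos (Set.mem_Ioo.mpr ⟨hm2.1, lt_trans hm2.2 hBC⟩),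
        if_neg (fun hc : x ∈ Set.Ioo B C => absurd hc.1 (not_lt.mpr hm2.2.le)),
        if_neg (fun hc : x ∈ Set.Ioo B B' => absurd hc.1 (not_lt.mpr hm2.2.le)),
        if_pos (Set.mem_Ioo.mpr hm2)]
      ring
    · rw [if_neg (fun hc : x ∈ Set.Ioo B B' => hm ⟨hc.1, hc.2⟩),
        if_neg (fun hc : x ∈ Set.Ioo B' B => hm2 ⟨hc.1, hc.2⟩)]
      rcases lt_or_gt_of_ne hx1 with hxB | hxB
      · -- x < B, hence also x < B' (else B' < x < B, contra hm2 unless x = B')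
        have hxB' : x < B' := by
          rcases lt_or_gt_of_ne hx2 with h | h
          · exact h
          · exact absurd ⟨h, hxB⟩ hm2
        rw [if_neg (fun hc : x ∈ Set.Ioo B' C => absurd hc.1 (not_lt.mpr hxB'.le)),
          if_neg (fun hc : x ∈ Set.Ioo B C => absurd hc.1 (not_lt.mpr hxB.le))]
        by_cases hax : A < x
        · rw [if_pos (Set.mem_Ioo.mpr ⟨hax, hxB'⟩), if_pos (Set.mem_Ioo.mpr ⟨hax, hxB⟩)]; ring
        · rw [if_neg (fun hc : x ∈ Set.Ioo A B' => hax hc.1),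
            if_neg (fun hc : x ∈ Set.Ioo A B => hax hc.1)]; ring
      · -- x > B, hence also x > B'
        have hxB' : B' < x := by
          rcases lt_or_gt_of_ne hx2 with h | h
          · exact absurd ⟨hxB, h⟩ hm
          · exact h
        rw [if_neg (fun hc : x ∈ Set.Ioo A B' => absurd hc.2 (not_lt.mpr hxB'.le)),
          if_neg (fun hc : x ∈ Set.Ioo A B => absurd hc.2 (not_lt.mpr hxB.le))]
        by_cases hxc : x < C
        · rw [if_pos (Set.mem_Ioo.mpr ⟨hxB', hxc⟩), if_pos (Set.mem_Ioo.mpr ⟨hxB, hxc⟩)]; ring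
        · rw [if_neg (fun hc : x ∈ Set.Ioo B' C => hxc hc.2),
            if_neg (fun hc : x ∈ Set.Ioo B C => hxc hc.2)]; ring

end PCFun

lemma integral_mul_ite (f : ℝ → ℝ) (c u v : ℝ) (h : Set.Ioo u v ⊆ Set.Ioo (0:ℝ) 1) :
    ∫ x in Set.Ioo (0:ℝ) 1, f x * (if x ∈ Set.Ioo u v then c else 0)
      = c * ∫ x in Set.Ioo u v, f x := by
  have he : ∀ x, f x * (if x ∈ Set.Ioo u v then c else 0)
      = (Set.Ioo u v).indicator (fun y => c * f y) x := by
    intro x; by_cases hx : x ∈ Set.Ioo u v <;> simp [Set.indicator, hx, mul_comm]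
  rw [integral_congr_ae (Eventually.of_forall he),
    setIntegral_indicator measurableSet_Ioo,
    Set.inter_eq_self_of_subset_right h, MeasureTheory.integral_const_mul]

lemma integral_ite_const (c u v : ℝ) (huv : u ≤ v) (h : Set.Ioo u v ⊆ Set.Ioo (0:ℝ) 1) :
    ∫ x in Set.Ioo (0:ℝ) 1, (if x ∈ Set.Ioo u v then c else 0) = c * (v - u) := by
  have he : ∀ x, (if x ∈ Set.Ioo u v then c else 0)
      = (Set.Ioo u v).indicator (fun _ => c) x := by
    intro x; by_cases hx : x ∈ Set.Ioo u v <;> simp [Set.indicator, hx]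
  rw [integral_congr_ae (Eventually.of_forall he),
    setIntegral_indicator measurableSet_Ioo,
    Set.inter_eq_self_of_subset_right h, setIntegral_const, Real.volume_real_Ioo_of_le huv,
    smul_eq_mul, mul_comm]

lemma integral_close (g : ℝ → ℝ) (hg : ContinuousOn g (Set.Icc 0 1)) (y l r ε : ℝ) (hlr : l ≤ r)
    (hsub : Set.Ioo l r ⊆ Set.Icc (0:ℝ) 1) (hb : ∀ x ∈ Set.Ioo l r, |g x - g y| ≤ ε)
    (hε : 0 ≤ ε) :
    |(∫ x in Set.Ioo l r, g x) - (r - l) * g y| ≤ ε * (r - l) := by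
  have hgi : IntegrableOn g (Set.Ioo l r) := hg.integrableOn_Icc.mono_set hsub
  have hvol : (volume (Set.Ioo l r)).toReal = r - l := by
    rw [Real.volume_Ioo, ENNReal.toReal_ofReal (by linarith)]
  have heq : (∫ x in Set.Ioo l r, g x) - (r - l) * g y
      = ∫ x in Set.Ioo l r, (g x - g y) := by
    rw [integral_sub hgi ((integrableOn_const_iff).mpr (Or.inr (by rw [Real.volume_Ioo]; exact ENNReal.ofReal_lt_top))),
      setIntegral_const, measureReal_def, hvol, smul_eq_mul]
  rw [heq, ← Real.norm_eq_abs]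
  calc ‖∫ x in Set.Ioo l r, (g x - g y)‖ ≤ ε * (volume (Set.Ioo l r)).toReal := by
        apply norm_setIntegral_le_of_norm_le_const (by rw [Real.volume_Ioo]; exact ENNReal.ofReal_lt_top)
        · intro x hx; rw [Real.norm_eq_abs]; exact hb x hx
    _ = ε * (r - l) := by rw [hvol]


/-- First-order optimality condition: if `w̄ ∈ BV_W(0,1)` is a local minimizer of
`J = F + TV` over `BV_W(0,1)` w.r.t. the `L¹` distance, `F` is Fréchet differentiable
with `∇F : L¹ → L^∞` Lipschitz, and `g` is a continuous representative of `∇F(w̄)`,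
then `Σ_i |g(t_i)|·|v_i − v_{i−1}| = 0`, i.e. `g` vanishes at every jump point of `w̄`. -/
theorem first_order_optimality
    (W : Finset ℤ) (hW : 2 ≤ W.card)
    (F : (ℝ → ℝ) → ℝ) (gradF : (ℝ → ℝ) → ℝ → ℝ)
    -- Fréchet differentiability of F : L¹(0,1) → ℝ with F'(u)h = ∫₀¹ ∇F(u)·h
    (hdiff : ∀ u : ℝ → ℝ, ∀ ε : ℝ, 0 < ε → ∃ δ : ℝ, 0 < δ ∧ ∀ h : ℝ → ℝ,
      Integrable h (volume.restrict (Set.Ioo (0 : ℝ) 1)) →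
      (∫ x in Set.Ioo (0 : ℝ) 1, |h x|) ≤ δ →
      |F (u + h) - F u - ∫ x in Set.Ioo (0 : ℝ) 1, gradF u x * h x| ≤
        ε * ∫ x in Set.Ioo (0 : ℝ) 1, |h x|)
    -- ∇F(u) ∈ L^∞(0,1)
    (hbdd : ∀ u : ℝ → ℝ, ∃ B : ℝ, ∀ᵐ x ∂(volume.restrict (Set.Ioo (0 : ℝ) 1)), |gradF u x| ≤ B)
    -- Lipschitz continuity of ∇F : L¹(0,1) → L^∞(0,1)
    (κ : ℝ) (hκ : 0 < κ)
    (hlip : ∀ u v : ℝ → ℝ, ∀ᵐ x ∂(volume.restrict (Set.Ioo (0 : ℝ) 1)),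
      |gradF u x - gradF v x| ≤ κ * ∫ y in Set.Ioo (0 : ℝ) 1, |u y - v y|)
    -- w̄, given by its piecewise constant data, and the continuous representative g of ∇F(w̄)
    (p : PCFun W) (g : ℝ → ℝ) (hg : ContinuousOn g (Set.Icc (0 : ℝ) 1))
    (hrep : ∀ᵐ x ∂(volume.restrict (Set.Ioo (0 : ℝ) 1)), gradF p.fn x = g x)
    -- w̄ is a local minimizer of F + TV over BV_W(0,1) w.r.t. the L¹ distance
    (hmin : ∃ r : ℝ, 0 < r ∧ ∀ q : PCFun W,
      q.distL1 p ≤ r → F p.fn + p.tv ≤ F q.fn + q.tv) :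
    ∑ i ∈ Finset.range p.n, |g (p.t (i + 1))| * |(p.v (i + 1) : ℝ) - (p.v i : ℝ)| = 0 := by
  classical
  obtain ⟨rmin, hrmin, hminle⟩ := hmin
  apply Finset.sum_eq_zero
  intro i hir
  rw [Finset.mem_range] at hir
  set B := p.t (i + 1) with hBdef
  suffices hgB : g B = 0 by rw [hgB]; simp
  have hAB : p.t i < B := p.t_mono i (by omega)
  have hBC : B < p.t (i + 2) := p.t_mono (i + 1) (by omega)
  have hA0 : 0 ≤ p.t i := by
    have := p.t_le (Nat.zero_le i) (by omega)
    rw [p.t_zero] at this; exact this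
  have hC1 : p.t (i + 2) ≤ 1 := by
    have := p.t_le (show i + 2 ≤ p.n + 1 by omega) (le_refl _)
    rw [p.t_last] at this; exact this
  have hB0 : 0 < B := lt_of_le_of_lt hA0 hAB
  have hB1 : B < 1 := lt_of_lt_of_le hBC hC1
  set c : ℝ := (p.v i : ℝ) - (p.v (i + 1) : ℝ) with hcdef
  have hcne : c ≠ 0 := by
    have hne := p.v_ne i hir
    rw [hcdef, sub_ne_zero]
    exact_mod_cast hne
  have hcpos : 0 < |c| := abs_pos.mpr hcne
  have key2 : ∀ ε : ℝ, 0 < ε → |g B| ≤ ε := by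
    intro ε hε
    set ε' := ε / 2 with hε'def
    have hε' : 0 < ε' := by positivity
    obtain ⟨δ₁, hδ₁, hFd⟩ := hdiff p.fn ε' hε'
    have hgc : ContinuousWithinAt g (Set.Icc 0 1) B := hg B ⟨hB0.le, hB1.le⟩
    rw [Metric.continuousWithinAt_iff] at hgc
    obtain ⟨δ₂, hδ₂, hgc⟩ := hgc ε' hε'
    -- the key one-sided estimate
    have key : ∀ (q : PCFun W) (cc l u : ℝ), q.tv = p.tv →
        (∀ x : ℝ, x ∉ ({l, u} : Set ℝ) →
          q.fn x - p.fn x = if x ∈ Set.Ioo l u then cc else 0) →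
        Set.Ioo l u ⊆ Set.Ioo (0 : ℝ) 1 → l < u →
        (∀ x ∈ Set.Ioo l u, |g x - g B| ≤ ε') →
        |cc| * (u - l) ≤ δ₁ → |cc| * (u - l) ≤ rmin →
        -(2 * |cc| * ε') ≤ cc * g B := by
      intro q cc l u htv hq hsubset hlu hglocal hd1 hd2
      set D : ℝ → ℝ := fun x => if x ∈ Set.Ioo l u then cc else 0 with hD
      have hae : ∀ᵐ x ∂(volume.restrict (Set.Ioo (0 : ℝ) 1)), q.fn x - p.fn x = D x := by
        apply ae_restrict_of_ae
        have hz : volume ({l, u} : Set ℝ) = 0 := (Set.toFinite _).measure_zero _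
        filter_upwards [measure_eq_zero_iff_ae_notMem.mp hz] with x hx
        exact hq x hx
      have hDint : Integrable D (volume.restrict (Set.Ioo (0 : ℝ) 1)) := by
        have hDi : D = (Set.Ioo l u).indicator (fun _ => cc) := by
          funext x; simp only [hD, Set.indicator_apply]
        rw [hDi, integrable_indicator_iff measurableSet_Ioo]
        refine (integrableOn_const_iff).mpr (Or.inr ?_)
        calc (volume.restrict (Set.Ioo (0:ℝ) 1)) (Set.Ioo l u)
            ≤ volume (Set.Ioo l u) := Measure.restrict_le_self _
          _ < ⊤ := by rw [Real.volume_Ioo]; exact ENNReal.ofReal_lt_top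
      have hInt : Integrable (fun x => q.fn x - p.fn x)
          (volume.restrict (Set.Ioo (0 : ℝ) 1)) :=
        hDint.congr (by filter_upwards [hae] with x hx; exact hx.symm)
      have habs : (∫ x in Set.Ioo (0 : ℝ) 1, |q.fn x - p.fn x|) = |cc| * (u - l) := by
        have h1 : (fun x => |q.fn x - p.fn x|) =ᵐ[volume.restrict (Set.Ioo (0 : ℝ) 1)]
            (fun x => if x ∈ Set.Ioo l u then |cc| else 0) := by
          filter_upwards [hae] with x hx
          rw [hx]; simp only [hD]; split_ifs <;> simp
        rw [integral_congr_ae h1, integral_ite_const _ _ _ hlu.le hsubset]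
      have hmin2 : F p.fn ≤ F q.fn := by
        have hdq : q.distL1 p ≤ rmin := by
          show (∫ x in Set.Ioo (0 : ℝ) 1, |q.fn x - p.fn x|) ≤ rmin
          rw [habs]; exact hd2
        have := hminle q hdq
        rw [htv] at this; linarith
      have hFdh := hFd (fun x => q.fn x - p.fn x) hInt (by rw [habs]; exact hd1)
      have hqeq : (p.fn + fun x => q.fn x - p.fn x) = q.fn := by
        funext x; show p.fn x + (q.fn x - p.fn x) = q.fn x; ring
      rw [hqeq, habs] at hFdh
      have hgr : (∫ x in Set.Ioo (0 : ℝ) 1, gradF p.fn x * (q.fn x - p.fn x))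
          = cc * ∫ x in Set.Ioo l u, g x := by
        have h1 : (fun x => gradF p.fn x * (q.fn x - p.fn x))
            =ᵐ[volume.restrict (Set.Ioo (0 : ℝ) 1)]
            (fun x => g x * D x) := by
          filter_upwards [hrep, hae] with x h1 h2; rw [h1, h2]
        rw [integral_congr_ae h1]; exact integral_mul_ite g cc l u hsubset
      rw [hgr] at hFdh
      have hclose : |(∫ x in Set.Ioo l u, g x) - (u - l) * g B| ≤ ε' * (u - l) :=
        integral_close g hg B l u ε' hlu.le
          (hsubset.trans Set.Ioo_subset_Icc_self) hglocal hε'.le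
      have h0 : 0 ≤ F q.fn - F p.fn := by linarith
      obtain ⟨ha1, ha2⟩ := abs_le.mp hFdh
      -- cc * ∫ ≥ -(ε' * (|cc|*(u-l)))
      have h4 : -(ε' * (|cc| * (u - l))) ≤ cc * ∫ x in Set.Ioo l u, g x := by linarith
      have h5 : cc * ((∫ x in Set.Ioo l u, g x) - (u - l) * g B) ≤ |cc| * (ε' * (u - l)) := by
        refine le_trans (le_abs_self _) ?_
        rw [abs_mul]
        exact mul_le_mul_of_nonneg_left hclose (abs_nonneg _)
      have hid : (cc * g B) * (u - l) = cc * (∫ x in Set.Ioo l u, g x)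
          - cc * ((∫ x in Set.Ioo l u, g x) - (u - l) * g B) := by ring
      have h7 : -(2 * |cc| * ε') * (u - l) ≤ (cc * g B) * (u - l) := by
        rw [hid]; linarith
      exact le_of_mul_le_mul_right h7 (by linarith)
    -- choose the shift size s
    have hs1 : 0 < (p.t (i + 2) - B) / 2 := by linarith
    have hs2 : 0 < (B - p.t i) / 2 := by linarith
    have hs3 : 0 < δ₁ / |c| := by positivity
    have hs4 : 0 < rmin / |c| := by positivity
    set s := min (min ((p.t (i + 2) - B) / 2) ((B - p.t i) / 2))
      (min δ₂ (min (δ₁ / |c|) (rmin / |c|))) with hsdef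
    have hs : 0 < s := lt_min (lt_min hs1 hs2) (lt_min hδ₂ (lt_min hs3 hs4))
    have hsa : s ≤ (p.t (i + 2) - B) / 2 := le_trans (min_le_left _ _) (min_le_left _ _)
    have hsb : s ≤ (B - p.t i) / 2 := le_trans (min_le_left _ _) (min_le_right _ _)
    have hsc : s ≤ δ₂ := le_trans (min_le_right _ _) (min_le_left _ _)
    have hsd : s ≤ δ₁ / |c| := le_trans (min_le_right _ _)
      (le_trans (min_le_right _ _) (min_le_left _ _))
    have hse : s ≤ rmin / |c| := le_trans (min_le_right _ _)
      (le_trans (min_le_right _ _) (min_le_right _ _))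
    have hcs1 : |c| * s ≤ δ₁ := by
      rw [mul_comm]; exact (le_div_iff₀ hcpos).mp hsd
    have hcs2 : |c| * s ≤ rmin := by
      rw [mul_comm]; exact (le_div_iff₀ hcpos).mp hse
    -- right shift
    have h1r : p.t i < B + s := by linarith
    have h2r : B + s < p.t (i + 2) := by linarith
    have hR : -(2 * |c| * ε') ≤ c * g B := by
      apply key (p.moveJump i hir (B + s) h1r h2r) c B (B + s)
        (p.moveJump_tv i hir (B + s) h1r h2r)
      · intro x hx
        simp only [Set.mem_insert_iff, Set.mem_singleton_iff] at hx
        push_neg at hx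
        rw [p.fn_sub_eq i hir (B + s) h1r h2r x hx.1 hx.2,
          if_neg (fun hc : x ∈ Set.Ioo (B + s) B => by
            have := hc.1; have := hc.2; linarith)]
        rw [add_zero]
      · intro x hx
        exact ⟨lt_trans hB0 hx.1, by linarith [hx.2]⟩
      · linarith
      · intro x hx
        have hd := hgc ⟨by linarith [hx.1], by linarith [hx.2]⟩
          (show dist x B < δ₂ by
            rw [Real.dist_eq, abs_of_pos (by linarith [hx.1] : (0:ℝ) < x - B)]
            linarith [hx.2])
        rw [Real.dist_eq] at hd
        exact hd.le
      · simpa using hcs1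
      · simpa using hcs2
    -- left shift
    have h1l : p.t i < B - s := by linarith
    have h2l : B - s < p.t (i + 2) := by linarith
    have hL : -(2 * |c| * ε') ≤ -(c * g B) := by
      have habs' : |(p.v (i + 1) : ℝ) - (p.v i : ℝ)| = |c| := by
        rw [hcdef, abs_sub_comm]
      have := key (p.moveJump i hir (B - s) h1l h2l)
        ((p.v (i + 1) : ℝ) - (p.v i : ℝ)) (B - s) B
        (p.moveJump_tv i hir (B - s) h1l h2l)
        (by
          intro x hx
          simp only [Set.mem_insert_iff, Set.mem_singleton_iff] at hx
          push_neg at hx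
          rw [p.fn_sub_eq i hir (B - s) h1l h2l x hx.2 hx.1,
            if_neg (fun hc : x ∈ Set.Ioo B (B - s) => by
              have := hc.1; have := hc.2; linarith)]
          rw [zero_add])
        (by
          intro x hx
          exact ⟨by linarith [hx.1, hA0], lt_trans hx.2 hB1⟩)
        (by linarith)
        (by
          intro x hx
          have hd := hgc ⟨by linarith [hx.1, hA0], by linarith [hx.2]⟩
            (show dist x B < δ₂ by
              rw [Real.dist_eq, abs_of_neg (by linarith [hx.2] : x - B < (0:ℝ))]
              linarith [hx.1])
          rw [Real.dist_eq] at hd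
          exact hd.le)
        (by rw [habs']; simpa using hcs1)
        (by rw [habs']; simpa using hcs2)
      rw [habs'] at this
      have hrev : ((p.v (i + 1) : ℝ) - (p.v i : ℝ)) * g B = -(c * g B) := by
        rw [hcdef]; ring
      rw [hrev] at this
      exact this
    have hcg : |c * g B| ≤ 2 * |c| * ε' := abs_le.mpr ⟨by linarith, by linarith⟩
    rw [abs_mul] at hcg
    have : |g B| ≤ 2 * ε' := by
      rw [show 2 * |c| * ε' = |c| * (2 * ε') by ring] at hcg
      exact le_of_mul_le_mul_left hcg hcpos
    rw [hε'def] at this; linarith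
  by_contra hne
  have hpos : 0 < |g B| := abs_pos.mpr hne
  have := key2 (|g B| / 2) (by positivity)
  linarith
end

section
/- Let W ⊂ ℤ be a finite set, N ∈ ℕ, and let w_n (n ∈ ℕ) and w be piecewise constant functions in BV_W(0,1) with n(w_n) ≤ N for all n. Suppose w_n → w in L¹(0,1). Let g_n, g : [0,1] → [0,∞) be continuous functions with g_n → g uniformly on [0,1]. Then the jump-sum functional is lower semicontinuous along this sequence: Σ_{i=1}^{n(w)} g(t_i)·|v_i − v_{i−1}| ≤ liminf_{n→∞} Σ_{j=1}^{n(w_n)} g_n(t_j^{(n)})·|v_j^{(n)} − v_{j−1}^{(n)}|, where t_i and v_i − v_{i−1} (respectively t_j^{(n)} and v_j^{(n)} − v_{j−1}^{(n)}) denote the jump points and jump heights of w (respectively of w_n). -/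
open MeasureTheory Set Filter

namespace PCFun

variable {W : Finset ℤ}

lemma t_strict (p : PCFun W) : ∀ {j}, j ≤ p.n + 1 → ∀ {i}, i < j → p.t i < p.t j := by
  intro j
  induction j with
  | zero => omega
  | succ j ih =>
    intro hj i hij
    rcases Nat.lt_succ_iff_lt_or_eq.mp hij with h | h
    · exact (ih (by omega) h).trans (p.t_mono j (by omega))
    · subst h; exact p.t_mono i (by omega)

lemma t_mono' (p : PCFun W) {i j : ℕ} (hij : i ≤ j) (hj : j ≤ p.n + 1) : p.t i ≤ p.t j := by
  rcases Nat.lt_or_ge i j with h | h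
  · exact (p.t_strict hj h).le
  · have : i = j := le_antisymm hij h
    simp [this]

lemma t_nonneg (p : PCFun W) {i : ℕ} (hi : i ≤ p.n + 1) : 0 ≤ p.t i := by
  have := p.t_mono' (Nat.zero_le i) hi
  simpa [p.t_zero] using this

lemma t_le_one (p : PCFun W) {i : ℕ} (hi : i ≤ p.n + 1) : p.t i ≤ 1 := by
  have := p.t_mono' hi le_rfl
  simpa [p.t_last] using this

lemma fn_eq (p : PCFun W) {i : ℕ} {x : ℝ} (hi : i ≤ p.n)
    (hx : x ∈ Set.Ioo (p.t i) (p.t (i + 1))) : p.fn x = p.v i := by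
  unfold fn
  rw [Finset.sum_eq_single_of_mem i (Finset.mem_range.mpr (by omega))]
  · rw [if_pos hx]
  · intro j hj hne
    rw [if_neg]
    intro hxj
    rcases Nat.lt_or_ge j i with h | h
    · have : p.t (j + 1) ≤ p.t i := p.t_mono' (by omega) (by omega)
      exact absurd hxj.2 (by linarith [hx.1])
    · have hji : i < j := lt_of_le_of_ne h (Ne.symm hne)
      have : p.t (i + 1) ≤ p.t j := p.t_mono' (by omega) (by
        have := Finset.mem_range.mp hj; omega)
      exact absurd hxj.1 (by linarith [hx.2])

lemma exists_mem_interval (p : PCFun W) {x : ℝ} (hx : x ∈ Set.Ioo (0 : ℝ) 1)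
    (hxt : ∀ j, j ≤ p.n + 1 → x ≠ p.t j) :
    ∃ i ≤ p.n, x ∈ Set.Ioo (p.t i) (p.t (i + 1)) := by
  classical
  set s := (Finset.range (p.n + 1)).filter (fun i => p.t i < x) with hs
  have h0 : (0 : ℕ) ∈ s := by
    simp [hs, p.t_zero, hx.1]
  have hsne : s.Nonempty := ⟨0, h0⟩
  set i := s.max' hsne with hidef
  have his : i ∈ s := s.max'_mem hsne
  have hirange : i ≤ p.n := by
    have := (Finset.mem_filter.mp his).1
    simpa [Nat.lt_succ_iff] using Finset.mem_range.mp this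
  have hti : p.t i < x := (Finset.mem_filter.mp his).2
  refine ⟨i, hirange, hti, ?_⟩
  by_contra hcon
  push_neg at hcon
  have hne : x ≠ p.t (i + 1) := hxt (i + 1) (by omega)
  have hlt : p.t (i + 1) < x := lt_of_le_of_ne hcon hne.symm
  have hiln : i < p.n := by
    rcases Nat.lt_or_ge i p.n with h | h
    · exact h
    · exfalso
      have : i = p.n := le_antisymm hirange h
      rw [this, p.t_last] at hlt
      linarith [hx.2]
  have : i + 1 ∈ s := Finset.mem_filter.mpr ⟨Finset.mem_range.mpr (by omega), hlt⟩
  have := s.le_max' _ this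
  omega

lemma integrableOn_fn (p : PCFun W) : IntegrableOn p.fn (Set.Ioo (0 : ℝ) 1) := by
  have heq : p.fn = fun x => ∑ i ∈ Finset.range (p.n + 1),
      (Set.Ioo (p.t i) (p.t (i + 1))).indicator (fun _ => (p.v i : ℝ)) x := by
    funext x
    unfold fn
    refine Finset.sum_congr rfl fun i _ => ?_
    simp [Set.indicator_apply]
  rw [heq]
  apply integrable_finset_sum
  intro i _
  exact (integrableOn_const measure_Ioo_lt_top.ne).indicator measurableSet_Ioo

lemma exists_agree (p q : PCFun W) {a b : ℝ} {i : ℕ} (hi : i ≤ q.n)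
    (hab : Set.Ioo a b ⊆ Set.Ioo (q.t i) (q.t (i + 1))) (hlt : a < b)
    (hd : p.distL1 q < b - a) :
    ∃ j ≤ p.n, p.v j = q.v i ∧ (Set.Ioo (p.t j) (p.t (j + 1)) ∩ Set.Ioo a b).Nonempty := by
  by_contra hcon
  push_neg at hcon
  have h01 : Set.Ioo a b ⊆ Set.Ioo (0 : ℝ) 1 := fun x hx => by
    have h := hab hx
    constructor
    · linarith [q.t_nonneg (show i ≤ q.n + 1 by omega), h.1]
    · linarith [q.t_le_one (show i + 1 ≤ q.n + 1 by omega), h.2]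
  have key : ∀ x ∈ Set.Ioo a b, (∀ j, j ≤ p.n + 1 → x ≠ p.t j) →
      1 ≤ |p.fn x - q.fn x| := by
    intro x hx hxt
    obtain ⟨j, hj, hxj⟩ := p.exists_mem_interval (h01 hx) hxt
    have hpf : p.fn x = p.v j := p.fn_eq hj hxj
    have hqf : q.fn x = q.v i := q.fn_eq hi (hab hx)
    have hvne : p.v j ≠ q.v i := by
      intro heq
      have : (Set.Ioo (p.t j) (p.t (j + 1)) ∩ Set.Ioo a b).Nonempty := ⟨x, hxj, hx⟩
      exact Set.nonempty_iff_ne_empty.mp this (hcon j hj heq)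
    rw [hpf, hqf]
    have h1 : (1 : ℤ) ≤ |p.v j - q.v i| := Int.one_le_abs (sub_ne_zero.mpr hvne)
    calc (1 : ℝ) = ((1 : ℤ) : ℝ) := by norm_num
      _ ≤ ((|p.v j - q.v i| : ℤ) : ℝ) := by exact_mod_cast h1
      _ = |(p.v j : ℝ) - (q.v i : ℝ)| := by push_cast; ring_nf
  set S : Set ℝ := ↑((Finset.range (p.n + 2)).image p.t) with hSdef
  have hSm : volume S = 0 := (Finset.finite_toSet _).measure_zero _
  have hae : ∀ᵐ x ∂(volume.restrict (Set.Ioo a b)), 1 ≤ |p.fn x - q.fn x| := by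
    rw [ae_restrict_iff' measurableSet_Ioo]
    have h0 : ∀ᵐ x : ℝ, x ∉ S := measure_eq_zero_iff_ae_notMem.mp hSm
    filter_upwards [h0] with x hxS hxab
    refine key x hxab fun j hj hxe => hxS ?_
    simp only [hSdef, Finset.coe_image, Set.mem_image, Finset.mem_coe, Finset.mem_range]
    exact ⟨j, by omega, hxe.symm⟩
  have hint : IntegrableOn (fun x => |p.fn x - q.fn x|) (Set.Ioo (0 : ℝ) 1) :=
    ((p.integrableOn_fn).sub (q.integrableOn_fn)).abs
  have h1 : b - a ≤ ∫ x in Set.Ioo a b, |p.fn x - q.fn x| := by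
    have hc : ∫ _ in Set.Ioo a b, (1 : ℝ) = b - a := by
      simp [Real.volume_Ioo, ENNReal.toReal_ofReal (by linarith : (0:ℝ) ≤ b - a), hlt.le]
    rw [← hc]
    exact integral_mono_ae (integrableOn_const measure_Ioo_lt_top.ne)
      (hint.mono_set h01) hae
  have h2 : ∫ x in Set.Ioo a b, |p.fn x - q.fn x| ≤ p.distL1 q := by
    unfold distL1
    exact setIntegral_mono_set hint
      (Filter.Eventually.of_forall fun x => abs_nonneg _)
      (HasSubset.Subset.eventuallyLE h01)
  linarith

end PCFun

/-- Lower semicontinuity of the jump-sum functional: if `w_k → w` in `L¹(0,1)` with the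
numbers of jumps of the `w_k` uniformly bounded, and `g_k → g` uniformly on `[0,1]` with
`g_k, g` continuous and nonnegative, then
`Σ_i g(t_i)|v_i − v_{i−1}| ≤ liminf_k Σ_j g_k(t_j^{(k)})|v_j^{(k)} − v_{j−1}^{(k)}|`. -/
theorem jump_sum_lsc
    (W : Finset ℤ) (hW : 2 ≤ W.card) (N : ℕ)
    (p : ℕ → PCFun W) (q : PCFun W)
    (hN : ∀ k, (p k).n ≤ N)
    (hL1 : Tendsto (fun k => (p k).distL1 q) atTop (nhds 0))
    (gn : ℕ → ℝ → ℝ) (g : ℝ → ℝ)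
    (hgn : ∀ k, ContinuousOn (gn k) (Set.Icc (0 : ℝ) 1))
    (hg : ContinuousOn g (Set.Icc (0 : ℝ) 1))
    (hgn0 : ∀ k, ∀ x ∈ Set.Icc (0 : ℝ) 1, 0 ≤ gn k x)
    (hg0 : ∀ x ∈ Set.Icc (0 : ℝ) 1, 0 ≤ g x)
    (hunif : TendstoUniformlyOn gn g atTop (Set.Icc (0 : ℝ) 1)) :
    (∑ i ∈ Finset.range q.n, g (q.t (i + 1)) * |(q.v (i + 1) : ℝ) - (q.v i : ℝ)|) ≤
      atTop.liminf (fun k => ∑ j ∈ Finset.range (p k).n,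
        gn k ((p k).t (j + 1)) * |((p k).v (j + 1) : ℝ) - ((p k).v j : ℝ)|) := by
    classical
  set F : ℕ → ℝ := fun k => ∑ j ∈ Finset.range (p k).n,
      gn k ((p k).t (j + 1)) * |((p k).v (j + 1) : ℝ) - ((p k).v j : ℝ)| with hFdef
  have hWne : W.Nonempty := Finset.card_pos.mp (by omega)
  set B : ℝ := ((W.sup' hWne fun z => |z| : ℤ) : ℝ) with hBdef
  have hBb : ∀ z ∈ W, |(z : ℝ)| ≤ B := by
    intro z hz
    have h : |z| ≤ W.sup' hWne fun z => |z| := Finset.le_sup' _ hz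
    calc |(z : ℝ)| = ((|z| : ℤ) : ℝ) := by push_cast; ring
      _ ≤ B := by rw [hBdef]; exact_mod_cast h
  obtain ⟨w0, hw0⟩ := hWne
  have hB0 : 0 ≤ B := le_trans (abs_nonneg _) (hBb _ hw0)
  have hjump : ∀ P : PCFun W, ∀ j < P.n, |(P.v (j + 1) : ℝ) - P.v j| ≤ 2 * B := by
    intro P j hj
    have h1 := hBb _ (P.v_mem (j + 1) (by omega))
    have h2 := hBb _ (P.v_mem j (by omega))
    calc |(P.v (j + 1) : ℝ) - P.v j| ≤ |(P.v (j + 1) : ℝ)| + |(P.v j : ℝ)| := abs_sub _ _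
      _ ≤ 2 * B := by linarith
  have hPt : ∀ P : PCFun W, ∀ j < P.n, P.t (j + 1) ∈ Set.Icc (0 : ℝ) 1 := fun P j hj =>
    ⟨P.t_nonneg (by omega), P.t_le_one (by omega)⟩
  obtain ⟨G, hG⟩ := isCompact_Icc.bddAbove_image hg
  have hGb : ∀ x ∈ Set.Icc (0 : ℝ) 1, g x ≤ G := fun x hx => hG ⟨x, hx, rfl⟩
  have hG0 : 0 ≤ G := le_trans (hg0 0 (by norm_num)) (hGb 0 (by norm_num))
  have hFb : ∀ᶠ k in atTop, F k ≤ N * ((G + 1) * (2 * B)) := by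
    filter_upwards [Metric.tendstoUniformlyOn_iff.mp hunif 1 one_pos] with k hk
    have hterm : ∀ j < (p k).n,
        gn k ((p k).t (j + 1)) * |((p k).v (j + 1) : ℝ) - (p k).v j| ≤ (G + 1) * (2 * B) := by
      intro j hj
      have ht := hPt (p k) j hj
      have h1 : gn k ((p k).t (j + 1)) ≤ G + 1 := by
        have hd := hk _ ht
        rw [Real.dist_eq] at hd
        have habs := abs_lt.mp hd
        linarith [hGb _ ht]
      exact mul_le_mul h1 (hjump _ j hj) (abs_nonneg _) (by linarith)
    calc F k ≤ ∑ _j ∈ Finset.range (p k).n, (G + 1) * (2 * B) :=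
        Finset.sum_le_sum fun j hj => hterm j (Finset.mem_range.mp hj)
      _ = ((p k).n : ℝ) * ((G + 1) * (2 * B)) := by
        rw [Finset.sum_const, Finset.card_range, nsmul_eq_mul]
      _ ≤ N * ((G + 1) * (2 * B)) := by
        have hn : ((p k).n : ℝ) ≤ N := by exact_mod_cast hN k
        exact mul_le_mul_of_nonneg_right hn (mul_nonneg (by linarith) (by linarith))
  have hcob : IsCoboundedUnder (· ≥ ·) atTop F :=
    isCoboundedUnder_ge_of_eventually_le atTop hFb
  have main : ∀ δ : ℝ, 0 < δ →
      (∑ i ∈ Finset.range q.n, g (q.t (i + 1)) * |(q.v (i + 1) : ℝ) - (q.v i : ℝ)|) -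
        δ * (∑ i ∈ Finset.range q.n, |(q.v (i + 1) : ℝ) - (q.v i : ℝ)|) ≤ atTop.liminf F := by
    intro δ hδ
    have hqne : (0 : ℕ) ∈ Finset.range (q.n + 1) := Finset.mem_range.mpr (by omega)
    set c : ℝ := (Finset.range (q.n + 1)).inf' ⟨0, hqne⟩ (fun i => q.t (i + 1) - q.t i)
      with hcdef
    have hc0 : 0 < c := by
      rw [hcdef]; refine (Finset.lt_inf'_iff _).2 ?_
      intro i hi
      have hi' : i ≤ q.n := by have := Finset.mem_range.mp hi; omega
      exact sub_pos.mpr (q.t_mono i hi')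
    have hcle : ∀ i ≤ q.n, c ≤ q.t (i + 1) - q.t i := fun i hi =>
      Finset.inf'_le _ (Finset.mem_range.mpr (by omega))
    obtain ⟨r, hr0, hgr⟩ : ∃ r > 0, ∀ x ∈ Set.Icc (0 : ℝ) 1, ∀ y ∈ Set.Icc (0 : ℝ) 1,
        |x - y| < r → |g x - g y| < δ / 2 := by
      have huc : UniformContinuousOn g (Set.Icc 0 1) :=
        isCompact_Icc.uniformContinuousOn_of_continuous hg
      rw [Metric.uniformContinuousOn_iff] at huc
      obtain ⟨r, hr0, h⟩ := huc (δ / 2) (by linarith)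
      refine ⟨r, hr0, fun x hx y hy hxy => ?_⟩
      have := h x hx y hy (by rwa [Real.dist_eq])
      rwa [Real.dist_eq] at this
    set ε : ℝ := min (c / 3) r with hεdef
    have hε0 : 0 < ε := lt_min (by linarith) hr0
    have hεc : 3 * ε ≤ c := by
      have := min_le_left (c / 3) r
      rw [hεdef]; linarith
    have hεr : ε ≤ r := min_le_right _ _
    refine le_liminf_of_le hcob ?_
    filter_upwards [hL1.eventually_lt_const hε0, Metric.tendstoUniformlyOn_iff.mp hunif (δ / 2) (by linarith)] with k hk1 hk2
    set P := p k with hPdef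
    set J : ℕ → Finset ℕ := fun i =>
      (Finset.range P.n).filter (fun j => |P.t (j + 1) - q.t (i + 1)| < ε) with hJdef
    have claim1 : ∀ i < q.n,
        |(q.v (i + 1) : ℝ) - q.v i| ≤ ∑ j ∈ J i, |(P.v (j + 1) : ℝ) - P.v j| := by
      intro i hi
      have hgapi : c ≤ q.t (i + 1) - q.t i := hcle i (by omega)
      have hgapi1 : c ≤ q.t (i + 1 + 1) - q.t (i + 1) := hcle (i + 1) (by omega)
      obtain ⟨A, hA, hvA, ⟨x, hxA, hxab⟩⟩ :=
        P.exists_agree q (a := q.t (i + 1) - ε) (b := q.t (i + 1)) (i := i) (by omega)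
          (fun y hy => ⟨by have := hy.1; linarith, hy.2⟩) (by linarith)
          (by have : q.t (i + 1) - (q.t (i + 1) - ε) = ε := by ring
              rw [this]; exact hk1)
      obtain ⟨Bi, hBi, hvB, ⟨y, hyB, hyab⟩⟩ :=
        P.exists_agree q (a := q.t (i + 1)) (b := q.t (i + 1) + ε) (i := i + 1) (by omega)
          (fun y hy => ⟨hy.1, by have := hy.2; linarith⟩) (by linarith)
          (by have : q.t (i + 1) + ε - q.t (i + 1) = ε := by ring
              rw [this]; exact hk1)
      have hABne : A ≠ Bi := by
        intro h
        rw [h, hvB] at hvA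
        exact q.v_ne i hi hvA.symm
      have hmM : min A Bi < max A Bi := min_lt_max.mpr hABne
      have hMn : max A Bi ≤ P.n := max_le hA hBi
      have hlow : q.t (i + 1) - ε < P.t (min A Bi + 1) := by
        rcases hABne.lt_or_gt with hAB | hAB
        · rw [min_eq_left hAB.le]
          exact lt_trans hxab.1 hxA.2
        · rw [min_eq_right hAB.le]
          have h1 : q.t (i + 1) < y := hyab.1
          linarith [hyB.2, hε0]
      have hhigh : P.t (max A Bi) < q.t (i + 1) + ε := by
        rcases hABne.lt_or_gt with hAB | hAB
        · rw [max_eq_right hAB.le]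
          linarith [hyB.1, hyab.2]
        · rw [max_eq_left hAB.le]
          linarith [hxA.1, hxab.2, hε0]
      have hsub : Finset.Ico (min A Bi) (max A Bi) ⊆ J i := by
        intro j hj
        obtain ⟨hj1, hj2⟩ := Finset.mem_Ico.mp hj
        refine Finset.mem_filter.mpr ⟨Finset.mem_range.mpr (by omega), ?_⟩
        have hl : P.t (min A Bi + 1) ≤ P.t (j + 1) := P.t_mono' (by omega) (by omega)
        have hh : P.t (j + 1) ≤ P.t (max A Bi) := P.t_mono' (by omega) (by omega)
        rw [abs_lt]
        constructor <;> linarith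
      have htel : |(P.v (max A Bi) : ℝ) - P.v (min A Bi)| ≤
          ∑ j ∈ Finset.Ico (min A Bi) (max A Bi), |(P.v (j + 1) : ℝ) - P.v j| := by
        have h1 : ((P.v (max A Bi) : ℝ) - P.v (min A Bi)) =
            ∑ j ∈ Finset.Ico (min A Bi) (max A Bi), ((P.v (j + 1) : ℝ) - P.v j) := by
          rw [Finset.sum_Ico_eq_sub _ hmM.le,
            Finset.sum_range_sub (fun j => (P.v j : ℝ)),
            Finset.sum_range_sub (fun j => (P.v j : ℝ))]
          ring
        rw [h1]
        exact Finset.abs_sum_le_sum_abs _ _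
      have hqv : |(q.v (i + 1) : ℝ) - q.v i| = |(P.v (max A Bi) : ℝ) - P.v (min A Bi)| := by
        rcases hABne.lt_or_gt with hAB | hAB
        · rw [max_eq_right hAB.le, min_eq_left hAB.le, hvA, hvB]
        · rw [max_eq_left hAB.le, min_eq_right hAB.le, hvA, hvB, abs_sub_comm]
      rw [hqv]
      exact htel.trans (Finset.sum_le_sum_of_subset_of_nonneg hsub fun j _ _ => abs_nonneg _)
    have hJr : ∀ i, J i ⊆ Finset.range P.n := fun i => Finset.filter_subset _ _
    have htermnn : ∀ j ∈ Finset.range P.n,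
        0 ≤ gn k (P.t (j + 1)) * |(P.v (j + 1) : ℝ) - P.v j| := by
      intro j hj
      exact mul_nonneg (hgn0 k _ (hPt P j (Finset.mem_range.mp hj))) (abs_nonneg _)
    have claim2 : ∀ i ∈ Finset.range q.n,
        (g (q.t (i + 1)) - δ) * |(q.v (i + 1) : ℝ) - q.v i| ≤
          ∑ j ∈ J i, gn k (P.t (j + 1)) * |(P.v (j + 1) : ℝ) - P.v j| := by
      intro i hi
      have hi' : i < q.n := Finset.mem_range.mp hi
      have hsum_nn : 0 ≤ ∑ j ∈ J i, gn k (P.t (j + 1)) * |(P.v (j + 1) : ℝ) - P.v j| :=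
        Finset.sum_nonneg fun j hj => htermnn j (hJr i hj)
      rcases le_or_gt (g (q.t (i + 1)) - δ) 0 with hgd | hgd
      · exact le_trans (mul_nonpos_of_nonpos_of_nonneg hgd (abs_nonneg _)) hsum_nn
      · have hsIcc : q.t (i + 1) ∈ Set.Icc (0 : ℝ) 1 :=
          ⟨q.t_nonneg (by omega), q.t_le_one (by omega)⟩
        have hgnb : ∀ j ∈ J i, g (q.t (i + 1)) - δ ≤ gn k (P.t (j + 1)) := by
          intro j hj
          obtain ⟨hjr, hjd⟩ := Finset.mem_filter.mp hj
          have htIcc := hPt P j (Finset.mem_range.mp hjr)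
          have h1 : |g (P.t (j + 1)) - g (q.t (i + 1))| < δ / 2 :=
            hgr _ htIcc _ hsIcc (lt_of_lt_of_le hjd hεr)
          have h2 : dist (g (P.t (j + 1))) (gn k (P.t (j + 1))) < δ / 2 := hk2 _ htIcc
          rw [Real.dist_eq] at h2
          have h1' := abs_lt.mp h1
          have h2' := abs_lt.mp h2
          linarith
        calc (g (q.t (i + 1)) - δ) * |(q.v (i + 1) : ℝ) - q.v i|
            ≤ (g (q.t (i + 1)) - δ) * ∑ j ∈ J i, |(P.v (j + 1) : ℝ) - P.v j| :=
              mul_le_mul_of_nonneg_left (claim1 i hi') hgd.le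
          _ = ∑ j ∈ J i, (g (q.t (i + 1)) - δ) * |(P.v (j + 1) : ℝ) - P.v j| :=
              Finset.mul_sum _ _ _
          _ ≤ ∑ j ∈ J i, gn k (P.t (j + 1)) * |(P.v (j + 1) : ℝ) - P.v j| :=
              Finset.sum_le_sum fun j hj =>
                mul_le_mul_of_nonneg_right (hgnb j hj) (abs_nonneg _)
    have hdisj : (↑(Finset.range q.n) : Set ℕ).PairwiseDisjoint J := by
      have aux : ∀ a b : ℕ, a < q.n → b < q.n → a < b → Disjoint (J a) (J b) := by
        intro a b ha hb hab
        rw [Finset.disjoint_left]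
        intro j hja hjb
        obtain ⟨_, h1⟩ := Finset.mem_filter.mp hja
        obtain ⟨_, h2⟩ := Finset.mem_filter.mp hjb
        have hmono : q.t (a + 1 + 1) ≤ q.t (b + 1) := q.t_mono' (by omega) (by omega)
        have hgapa := hcle (a + 1) (by omega)
        have e1 := abs_lt.mp h1
        have e2 := abs_lt.mp h2
        linarith
      intro i hi i' hi' hne
      have hi2 : i < q.n := by
        have := Finset.mem_coe.mp hi; exact Finset.mem_range.mp this
      have hi2' : i' < q.n := by
        have := Finset.mem_coe.mp hi'; exact Finset.mem_range.mp this
      rcases hne.lt_or_gt with h | h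
      · exact aux _ _ hi2 hi2' h
      · exact (aux _ _ hi2' hi2 h).symm
    have step1 : (∑ i ∈ Finset.range q.n, g (q.t (i + 1)) * |(q.v (i + 1) : ℝ) - (q.v i : ℝ)|) -
        δ * (∑ i ∈ Finset.range q.n, |(q.v (i + 1) : ℝ) - (q.v i : ℝ)|) =
        ∑ i ∈ Finset.range q.n, (g (q.t (i + 1)) - δ) * |(q.v (i + 1) : ℝ) - (q.v i : ℝ)| := by
      rw [Finset.mul_sum, ← Finset.sum_sub_distrib]
      exact Finset.sum_congr rfl fun i _ => by ring
    rw [step1]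
    have hFk : F k = ∑ j ∈ Finset.range P.n, gn k (P.t (j + 1)) * |(P.v (j + 1) : ℝ) - P.v j| := rfl
    rw [hFk]
    calc ∑ i ∈ Finset.range q.n, (g (q.t (i + 1)) - δ) * |(q.v (i + 1) : ℝ) - (q.v i : ℝ)|
        ≤ ∑ i ∈ Finset.range q.n, ∑ j ∈ J i, gn k (P.t (j + 1)) * |(P.v (j + 1) : ℝ) - P.v j| :=
          Finset.sum_le_sum claim2
      _ = ∑ j ∈ (Finset.range q.n).biUnion J, gn k (P.t (j + 1)) * |(P.v (j + 1) : ℝ) - P.v j| :=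
          (Finset.sum_biUnion hdisj).symm
      _ ≤ ∑ j ∈ Finset.range P.n, gn k (P.t (j + 1)) * |(P.v (j + 1) : ℝ) - P.v j| :=
          Finset.sum_le_sum_of_subset_of_nonneg
            (Finset.biUnion_subset.mpr fun i _ => hJr i)
            (fun j hj _ => htermnn j hj)
  refine le_of_forall_pos_le_add fun ε' hε' => ?_
  have htv : 0 ≤ ∑ i ∈ Finset.range q.n, |(q.v (i + 1) : ℝ) - (q.v i : ℝ)| :=
    Finset.sum_nonneg fun i _ => abs_nonneg _
  set T := ∑ i ∈ Finset.range q.n, |(q.v (i + 1) : ℝ) - (q.v i : ℝ)| with hTdef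
  have hδ : 0 < ε' / (T + 1) := div_pos hε' (by linarith)
  have h := main _ hδ
  have hmul : (ε' / (T + 1)) * T ≤ ε' := by
    rw [div_mul_eq_mul_div, div_le_iff₀ (by linarith)]
    nlinarith
  linarith
end

section
/- Let p > 1, let 0 ≤ a < b, and let g : [a,b] → ℝ be absolutely continuous with g(x) = g(t) + ∫_t^x g'(τ) dτ for all t, x ∈ [a,b], where g' ∈ L^p(a,b). Then for every t ∈ [a,b] and every h ≥ 0 with t + h ≤ b: |∫_t^{t+h} g(s) ds − h·g(t)| ≤ (p/(2p−1))·‖g'‖_{L^p(a,b)}·h^{(2p−1)/p}. -/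
open MeasureTheory Set

/-- Quantitative Taylor-type remainder estimate for an absolutely continuous function
`g` on `[a,b]` with derivative `g' ∈ L^p(a,b)`, `p > 1`:
`|∫_t^{t+h} g(s) ds − h·g(t)| ≤ (p/(2p−1))·‖g'‖_{L^p(a,b)}·h^{(2p−1)/p}`. -/
theorem taylor_remainder_Lp (p a b : ℝ) (hp : 1 < p) (ha : 0 ≤ a) (hab : a < b)
    (g g' : ℝ → ℝ)
    (hAC : ∀ t ∈ Icc a b, ∀ x ∈ Icc a b, g x = g t + ∫ τ in t..x, g' τ)
    (hmem : MemLp g' (ENNReal.ofReal p) (volume.restrict (Ioo a b))) :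
    ∀ t ∈ Icc a b, ∀ h : ℝ, 0 ≤ h → t + h ≤ b →
      |(∫ s in t..(t + h), g s) - h * g t| ≤
        (p / (2 * p - 1)) * (∫ x in Ioo a b, |g' x| ^ p) ^ (1 / p) *
          h ^ ((2 * p - 1) / p) := by
  intro t ht h hh hthb
  have hp0 : (0 : ℝ) < p := lt_trans one_pos hp
  have hpq : p.HolderConjugate (p / (p - 1)) := Real.HolderConjugate.conjExponent hp
  set q : ℝ := p / (p - 1) with hqdef
  set K : ℝ := (∫ x in Ioo a b, |g' x| ^ p) ^ (1 / p) with hK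
  set α : ℝ := (p - 1) / p with hα
  have hα0 : 0 ≤ α := div_nonneg (by linarith) hp0.le
  have h2p : (0 : ℝ) < 2 * p - 1 := by linarith
  have hα1 : α + 1 = (2 * p - 1) / p := by
    rw [hα]; field_simp; ring
  have hres : volume.restrict (Ioo a b) = volume.restrict (Ioc a b) :=
    Measure.restrict_congr_set Ioo_ae_eq_Ioc
  haveI : IsFiniteMeasure (volume.restrict (Ioo a b)) :=
    ⟨by rw [Measure.restrict_apply_univ]; exact measure_Ioo_lt_top⟩
  have hp1 : (1 : ENNReal) ≤ ENNReal.ofReal p := by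
    rw [← ENNReal.ofReal_one]; exact ENNReal.ofReal_le_ofReal hp.le
  -- integrability of g' and of |g'|^p on (a,b]
  have hg'int : IntegrableOn g' (Ioc a b) := by
    unfold IntegrableOn; rw [← hres]; exact hmem.integrable hp1
  have habsint : IntegrableOn (fun x => |g' x| ^ p) (Ioc a b) := by
    unfold IntegrableOn
    rw [← hres]
    have := hmem.integrable_norm_rpow
      (by simp [ENNReal.ofReal_eq_zero, not_le, hp0]) (by simp)
    simpa [ENNReal.toReal_ofReal hp0.le, Real.norm_eq_abs] using this
  have hKnonneg : 0 ≤ K := Real.rpow_nonneg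
    (integral_nonneg fun x => Real.rpow_nonneg (abs_nonneg _) _) _
  -- Step 1: pointwise bound |g s - g t| ≤ K * (s - t) ^ α
  have step1 : ∀ s ∈ Icc t (t + h), |g s - g t| ≤ K * (s - t) ^ α := by
    intro s hs
    have hts : t ≤ s := hs.1
    have hsb : s ≤ b := le_trans hs.2 hthb
    have hsI : s ∈ Icc a b := ⟨le_trans ht.1 hts, hsb⟩
    have hsub : Ioc t s ⊆ Ioc a b := Ioc_subset_Ioc ht.1 hsb
    have hmem2 : MemLp g' (ENNReal.ofReal p) (volume.restrict (Ioc t s)) :=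
      MemLp.mono_measure (by rw [hres]; exact Measure.restrict_mono hsub le_rfl) hmem
    have hone : MemLp (fun _ : ℝ => (1 : ℝ)) (ENNReal.ofReal q)
        (volume.restrict (Ioc t s)) := by
      haveI : IsFiniteMeasure (volume.restrict (Ioc t s)) :=
        ⟨by rw [Measure.restrict_apply_univ]; exact measure_Ioc_lt_top⟩
      exact memLp_const 1
    have hH := integral_mul_norm_le_Lp_mul_Lq hpq hmem2 hone
    simp only [norm_one, mul_one, Real.one_rpow, Real.norm_eq_abs] at hH
    have hvol : ∫ _ in Ioc t s, (1 : ℝ) = s - t := by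
      simp [Real.volume_Ioc, ENNReal.toReal_ofReal (sub_nonneg.2 hts), hts]
    rw [hvol] at hH
    have h1q : 1 / q = α := by
      rw [hqdef, hα]; field_simp
    rw [h1q] at hH
    -- bound the Lp norm on the subinterval by the one on (a,b)
    have hsetmono : (∫ x in Ioc t s, |g' x| ^ p) ≤ ∫ x in Ioo a b, |g' x| ^ p := by
      rw [hres]
      refine setIntegral_mono_set habsint ?_ (HasSubset.Subset.eventuallyLE hsub)
      exact Filter.Eventually.of_forall fun x => Real.rpow_nonneg (abs_nonneg _) _
    have hLp : (∫ x in Ioc t s, |g' x| ^ p) ^ (1 / p) ≤ K := by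
      rw [hK]
      exact Real.rpow_le_rpow (integral_nonneg fun x => Real.rpow_nonneg (abs_nonneg _) _)
        hsetmono (by positivity)
    have hgs : g s - g t = ∫ τ in t..s, g' τ := by
      rw [hAC t ht s hsI]; ring
    rw [hgs]
    calc |∫ τ in t..s, g' τ| ≤ ∫ τ in t..s, |g' τ| := by
          simpa [Real.norm_eq_abs] using
            intervalIntegral.norm_integral_le_integral_norm (f := g') (μ := volume) hts
      _ = ∫ τ in Ioc t s, |g' τ| := by rw [intervalIntegral.integral_of_le hts]
      _ ≤ (∫ x in Ioc t s, |g' x| ^ p) ^ (1 / p) * (s - t) ^ α := hH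
      _ ≤ K * (s - t) ^ α :=
          mul_le_mul_of_nonneg_right hLp (Real.rpow_nonneg (sub_nonneg.2 hts) _)
  -- Step 2: g is continuous (hence integrable) on [t, t+h]
  have hsub2 : Icc t (t + h) ⊆ Icc a b :=
    Icc_subset_Icc ht.1 hthb
  have hg'Icc : IntegrableOn g' (Icc a b) :=
    (integrableOn_Icc_iff_integrableOn_Ioc).mpr hg'int
  have hg'intTC : IntegrableOn g' (uIcc t (t + h)) := by
    rw [uIcc_of_le (by linarith)]
    exact hg'Icc.mono_set hsub2
  have hprim : ContinuousOn (fun x => ∫ τ in t..x, g' τ) (uIcc t (t + h)) :=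
    intervalIntegral.continuousOn_primitive_interval hg'intTC
  have hcontg : ContinuousOn g (uIcc t (t + h)) := by
    refine ContinuousOn.congr
      ((continuousOn_const (c := g t)).add hprim) ?_
    intro x hx
    rw [uIcc_of_le (by linarith)] at hx
    exact hAC t ht x (hsub2 hx)
  have hgInt : IntervalIntegrable g volume t (t + h) :=
    hcontg.intervalIntegrable
  -- rewrite LHS
  have hconst : ∫ _ in t..(t + h), g t = h * g t := by
    simp [mul_comm]
  have hLHS : (∫ s in t..(t + h), g s) - h * g t = ∫ s in t..(t + h), (g s - g t) := by
    rw [intervalIntegral.integral_sub hgInt intervalIntegrable_const, hconst]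
  rw [hLHS]
  -- the majorant is interval integrable
  have hcontmaj : Continuous fun s : ℝ => K * (s - t) ^ α := by
    refine continuous_const.mul ?_
    refine Continuous.rpow_const (by continuity) ?_
    intro x; right; exact hα0
  have hmajInt : IntervalIntegrable (fun s : ℝ => K * (s - t) ^ α) volume t (t + h) :=
    hcontmaj.intervalIntegrable t (t + h)
  have habsgInt : IntervalIntegrable (fun s : ℝ => |g s - g t|) volume t (t + h) :=
    (hgInt.sub intervalIntegrable_const).abs
  have hmono : (∫ s in t..(t + h), |g s - g t|) ≤ ∫ s in t..(t + h), K * (s - t) ^ α := by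
    refine intervalIntegral.integral_mono_on (by linarith) habsgInt hmajInt ?_
    exact step1
  have hval : (∫ s in t..(t + h), K * (s - t) ^ α) =
      K * (h ^ (α + 1) / (α + 1)) := by
    rw [intervalIntegral.integral_const_mul]
    congr 1
    have := intervalIntegral.integral_comp_sub_right (a := t) (b := t + h)
      (fun s : ℝ => s ^ α) t
    simp only [sub_self, add_sub_cancel_left] at this
    rw [this, integral_rpow (Or.inl (by linarith)),
      Real.zero_rpow (by positivity)]
    ring
  calc |∫ s in t..(t + h), (g s - g t)|
      ≤ ∫ s in t..(t + h), |g s - g t| := by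
        simpa [Real.norm_eq_abs] using
          intervalIntegral.norm_integral_le_integral_norm
            (f := fun s => g s - g t) (μ := volume) (by linarith : t ≤ t + h)
    _ ≤ ∫ s in t..(t + h), K * (s - t) ^ α := hmono
    _ = K * (h ^ (α + 1) / (α + 1)) := hval
    _ = p / (2 * p - 1) * K * h ^ ((2 * p - 1) / p) := by
        rw [hα1, div_div_eq_mul_div]
        ring
end
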